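/- arXiv:math/9802111 — 6 statements merged into one kernel-verified Lean document; each statement's English description precedes it below -/
import Mathlib

section
/- For integers 1 ≤ i ≤ L-k-1 with 1 ≤ k ≤ L-2, the following binomial identity holds: ∑_{j=0}^{k} (i+j) * C(i+j-1, j) * C(L-i-j-1, k-j) = i * C(L, k), where C denotes the ordinary binomial coefficient. -/
lemma hs_aux (a : ℕ) : ∀ k, ∑ j ∈ Finset.range (k+1), (a+j).choose j = (a+k+1).choose k := by
  intro k
  induction k with
  | zero => simp
  | succ k ih =>
    rw [Finset.sum_range_succ, ih,
      show a + (k+1) = a + k + 1 from by omega, ← Nat.choose_succ_succ',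
      show a + k + 1 + 1 = a + (k+1) + 1 from by omega]

lemma conv_aux : ∀ k b a, ∑ j ∈ Finset.range (k+1),
    (a+j).choose j * (b + (k-j)).choose (k-j) = (a+b+k+1).choose k := by
  intro k
  induction k with
  | zero => intro b a; simp
  | succ k ihk =>
    intro b
    induction b with
    | zero =>
      intro a
      have := hs_aux a (k+1)
      simpa using this
    | succ b ihb =>
      intro a
      have h1 : ∑ j ∈ Finset.range (k+2),
          (a+j).choose j * ((b+1) + (k+1-j)).choose (k+1-j)
        = (∑ j ∈ Finset.range (k+1), (a+j).choose j * ((b+1)+(k-j)).choose (k-j))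
          + ∑ j ∈ Finset.range (k+2), (a+j).choose j * (b+(k+1-j)).choose (k+1-j) := by
        rw [Finset.sum_range_succ (n := k+1), Finset.sum_range_succ (n := k+1)
          (f := fun j => (a+j).choose j * (b+(k+1-j)).choose (k+1-j))]
        have hterm : ∀ j ∈ Finset.range (k+1),
            (a+j).choose j * ((b+1) + (k+1-j)).choose (k+1-j)
          = (a+j).choose j * ((b+1)+(k-j)).choose (k-j)
            + (a+j).choose j * (b+(k+1-j)).choose (k+1-j) := by
          intro j hj
          simp only [Finset.mem_range] at hj
          have e1 : k+1-j = (k-j)+1 := by omega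
          have e2 : (b+1) + (k+1-j) = ((b+1)+(k-j))+1 := by omega
          rw [e2, e1, Nat.choose_succ_succ, mul_add,
            show b+1+(k-j) = b+(k-j+1) from by omega]
        rw [Finset.sum_congr rfl hterm, Finset.sum_add_distrib]
        simp
        ring
      rw [h1, ihk (b+1) a, ihb a,
        show a+b+(k+1)+1 = a+(b+1)+k+1 from by omega,
        show a+(b+1)+(k+1)+1 = (a+(b+1)+k+1)+1 from by omega]
      exact (Nat.choose_succ_succ' _ _).symm

/-- The binomial identity
`∑_{j=0}^{k} (i+j) C(i+j-1, j) C(L-i-j-1, k-j) = i C(L, k)`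
for `1 ≤ k ≤ L-2` and `1 ≤ i ≤ L-k-1`, a special case of the Gauss ₂F₁ sum. -/
theorem binomial_gauss_sum (L k i : ℕ) (hk1 : 1 ≤ k) (hk2 : k ≤ L - 2)
    (hi1 : 1 ≤ i) (hi2 : i ≤ L - k - 1) :
    ∑ j ∈ Finset.range (k + 1),
        (i + j) * Nat.choose (i + j - 1) j * Nat.choose (L - i - j - 1) (k - j)
      = i * Nat.choose L k := by
  obtain ⟨b, hb⟩ : ∃ b, L = i + k + 1 + b := ⟨L - (i+k+1), by omega⟩
  have hterm : ∀ j ∈ Finset.range (k+1),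
      (i + j) * Nat.choose (i + j - 1) j * Nat.choose (L - i - j - 1) (k - j)
    = i * ((i+j).choose j * (b + (k-j)).choose (k-j)) := by
    intro j hj
    simp only [Finset.mem_range] at hj
    have e1 : L - i - j - 1 = b + (k-j) := by omega
    have e2 : (i + j) * Nat.choose (i + j - 1) j = i * (i+j).choose j := by
      obtain ⟨i', rfl⟩ : ∃ i', i = i' + 1 := ⟨i - 1, by omega⟩
      rw [show i'+1+j = i'+j+1 from by omega, show i'+j+1-1 = i'+j from by omega]
      have h4 : (i'+j+1) * (i'+j).choose i' = (i'+j+1).choose (i'+1) * (i'+1) :=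
        Nat.add_one_mul_choose_eq (i'+j) i'
      have h5 : (i'+j).choose j = (i'+j).choose i' :=
        (Nat.choose_symm_of_eq_add (by omega)).symm
      have h6 : (i'+j+1).choose (i'+1) = (i'+j+1).choose j :=
        Nat.choose_symm_of_eq_add (by omega)
      calc (i'+j+1) * (i'+j).choose j = (i'+j+1) * (i'+j).choose i' := by rw [h5]
        _ = (i'+j+1).choose (i'+1) * (i'+1) := h4
        _ = (i'+1) * (i'+j+1).choose j := by rw [h6]; ring
    rw [e1, e2, mul_assoc]
  rw [Finset.sum_congr rfl hterm, ← Finset.mul_sum, conv_aux k b i]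
  congr 2
  omega
end

section
/- For a partition μ = (μ_1, ..., μ_n), the cocharge of the maximal one-column-reading tableau T_max equals ∑_{i<j} min{μ_i, μ_j}; equivalently, writing ||μ|| = ∑_{i<j} min{μ_i, μ_j}, for a one-row word the sum over all permutations μ̃ of μ of ∑_{k=1}^{L-1} (L-k)|μ̃_k ∩ μ̃_{k+1}|, divided by the number of permutations, equals ||μ||. -/
/-- `|((i₁)^{a₁}) ∩ ((i₂)^{a₂})| = min i₁ i₂ * min a₁ a₂`, the number of boxes in the
intersection of two rectangular partitions, represented as (width, height) pairs. -/
def rectInter (r s : ℕ × ℕ) : ℕ := min r.1 s.1 * min r.2 s.2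

lemma rectInter_comm (r s : ℕ × ℕ) : rectInter r s = rectInter s r := by
  simp [rectInter, min_comm]

lemma exists_perm_two {L : ℕ} {a b a' b' : Fin L} (hab : a ≠ b) (hab' : a' ≠ b') :
    ∃ τ : Equiv.Perm (Fin L), τ a = a' ∧ τ b = b' := by
  refine ⟨(Equiv.swap (Equiv.swap a a' b) b') * (Equiv.swap a a'), ?_, ?_⟩
  · simp only [Equiv.Perm.mul_apply, Equiv.swap_apply_left]
    apply Equiv.swap_apply_of_ne_of_ne
    · intro h
      have h2 : Equiv.swap a a' b = Equiv.swap a a' a := by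
        rw [Equiv.swap_apply_left]; exact h.symm
      exact hab ((Equiv.swap a a').injective h2).symm
    · exact hab'
  · simp only [Equiv.Perm.mul_apply, Equiv.swap_apply_left]

lemma sum_perm_pair_eq {L : ℕ} (f : Fin L → Fin L → ℕ) {a b a' b' : Fin L}
    (hab : a ≠ b) (hab' : a' ≠ b') :
    ∑ σ : Equiv.Perm (Fin L), f (σ a) (σ b)
      = ∑ σ : Equiv.Perm (Fin L), f (σ a') (σ b') := by
  obtain ⟨τ, hτa, hτb⟩ := exists_perm_two hab' hab
  refine Fintype.sum_equiv (Equiv.mulRight τ) _ _ (fun σ => ?_)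
  simp [Equiv.Perm.mul_apply, hτa, hτb]

lemma sum_offdiag_perm {L : ℕ} (f : Fin L → Fin L → ℕ) (σ : Equiv.Perm (Fin L)) :
    ∑ p ∈ (Finset.univ : Finset (Fin L)).offDiag, f (σ p.1) (σ p.2)
      = ∑ p ∈ (Finset.univ : Finset (Fin L)).offDiag, f p.1 p.2 := by
  refine Finset.sum_equiv (Equiv.prodCongr σ σ) (fun p => ?_) (fun p _ => rfl)
  simp [Finset.mem_offDiag, σ.injective.ne_iff]

lemma mul_pred (L : ℕ) : L * L - L = L * (L - 1) := by
  cases L with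
  | zero => simp
  | succ n => rw [Nat.succ_sub_one, Nat.mul_succ, Nat.add_sub_cancel]

lemma perm_pair_count {L : ℕ} (f : Fin L → Fin L → ℕ) {a b : Fin L} (hab : a ≠ b) :
    (L * (L - 1)) * ∑ σ : Equiv.Perm (Fin L), f (σ a) (σ b)
      = L.factorial * ∑ p ∈ (Finset.univ : Finset (Fin L)).offDiag, f p.1 p.2 := by
  have h1 : ∑ p ∈ (Finset.univ : Finset (Fin L)).offDiag,
      (∑ σ : Equiv.Perm (Fin L), f (σ p.1) (σ p.2))
      = (L * (L - 1)) * ∑ σ : Equiv.Perm (Fin L), f (σ a) (σ b) := by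
    have hconst : ∀ p ∈ (Finset.univ : Finset (Fin L)).offDiag,
        (∑ σ : Equiv.Perm (Fin L), f (σ p.1) (σ p.2))
          = ∑ σ : Equiv.Perm (Fin L), f (σ a) (σ b) := by
      intro p hp
      have hne : p.1 ≠ p.2 := (Finset.mem_offDiag.mp hp).2.2
      exact sum_perm_pair_eq f hne hab
    rw [Finset.sum_congr rfl hconst, Finset.sum_const, smul_eq_mul,
      Finset.offDiag_card, Finset.card_univ, Fintype.card_fin, mul_pred]
  have h2 : ∑ p ∈ (Finset.univ : Finset (Fin L)).offDiag,
      (∑ σ : Equiv.Perm (Fin L), f (σ p.1) (σ p.2))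
      = L.factorial * ∑ p ∈ (Finset.univ : Finset (Fin L)).offDiag, f p.1 p.2 := by
    rw [Finset.sum_comm]
    have : ∀ σ ∈ (Finset.univ : Finset (Equiv.Perm (Fin L))),
        ∑ p ∈ (Finset.univ : Finset (Fin L)).offDiag, f (σ p.1) (σ p.2)
          = ∑ p ∈ (Finset.univ : Finset (Fin L)).offDiag, f p.1 p.2 :=
      fun σ _ => sum_offdiag_perm f σ
    rw [Finset.sum_congr rfl this, Finset.sum_const, smul_eq_mul, Finset.card_univ,
      Fintype.card_perm, Fintype.card_fin]
  rw [← h1, h2]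

/-- Averaging identity behind `‖μ‖ = co(T_max)`: for an array `μ` of `L` rectangular
partitions, the sum over all permutations `σ` of the weighted sums
`∑_{k=1}^{L-1} (L-k) |μ̃_k ∩ μ̃_{k+1}|` (where `μ̃ = μ ∘ σ`) equals `L!` times
`‖μ‖ = ∑_{j<k} |μ_j ∩ μ_k|`; i.e. the average over all permutations is `‖μ‖`. -/
theorem cocharge_max_average (L : ℕ) (μ : Fin L → ℕ × ℕ) :
    ∑ σ : Equiv.Perm (Fin L), ∑ k : Fin (L - 1),
        (L - 1 - (k : ℕ)) *
          rectInter (μ (σ ⟨(k : ℕ), by have := k.isLt; omega⟩))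
            (μ (σ ⟨(k : ℕ) + 1, by have := k.isLt; omega⟩))
      = L.factorial *
          ∑ p ∈ Finset.univ.filter (fun p : Fin L × Fin L => p.1 < p.2),
            rectInter (μ p.1) (μ p.2) := by
  rcases Nat.lt_or_ge L 2 with hL | hL
  · interval_cases L
    · simp
    · have he : Finset.univ.filter (fun p : Fin 1 × Fin 1 => p.1 < p.2) = ∅ := by decide
      simp [he]
  · have h0 : (0 : ℕ) < L := by omega
    have h1 : (1 : ℕ) < L := hL
    set a₀ : Fin L := ⟨0, h0⟩
    set b₀ : Fin L := ⟨1, h1⟩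
    have hab₀ : a₀ ≠ b₀ := by simp [a₀, b₀, Fin.ext_iff]
    set f : Fin L → Fin L → ℕ := fun i j => rectInter (μ i) (μ j) with hf
    set C : ℕ := ∑ σ : Equiv.Perm (Fin L), f (σ a₀) (σ b₀) with hC
    set S : ℕ := ∑ p ∈ Finset.univ.filter (fun p : Fin L × Fin L => p.1 < p.2),
        rectInter (μ p.1) (μ p.2) with hS
    -- Step 1: LHS = K * C
    have hLHS : (∑ σ : Equiv.Perm (Fin L), ∑ k : Fin (L - 1),
        (L - 1 - (k : ℕ)) *
          rectInter (μ (σ ⟨(k : ℕ), by have := k.isLt; omega⟩))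
            (μ (σ ⟨(k : ℕ) + 1, by have := k.isLt; omega⟩)))
        = (∑ k : Fin (L - 1), (L - 1 - (k : ℕ))) * C := by
      rw [Finset.sum_comm, Finset.sum_mul]
      refine Finset.sum_congr rfl (fun k _ => ?_)
      rw [← Finset.mul_sum]
      congr 1
      have hne : (⟨(k : ℕ), by have := k.isLt; omega⟩ : Fin L)
          ≠ ⟨(k : ℕ) + 1, by have := k.isLt; omega⟩ := by
        simp [Fin.ext_iff]
      exact sum_perm_pair_eq f hne hab₀
    rw [hLHS]
    -- Step 2: offDiag sum = 2 * S
    have hW : ∑ p ∈ (Finset.univ : Finset (Fin L)).offDiag, f p.1 p.2 = 2 * S := by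
      have hsplit : (Finset.univ : Finset (Fin L)).offDiag
          = Finset.univ.filter (fun p : Fin L × Fin L => p.1 < p.2)
            ∪ Finset.univ.filter (fun p : Fin L × Fin L => p.2 < p.1) := by
        ext p
        simp only [Finset.mem_offDiag, Finset.mem_union, Finset.mem_filter,
          Finset.mem_univ, true_and]
        omega
      have hdisj : Disjoint (Finset.univ.filter (fun p : Fin L × Fin L => p.1 < p.2))
          (Finset.univ.filter (fun p : Fin L × Fin L => p.2 < p.1)) := by
        rw [Finset.disjoint_filter]
        intro p _ h1' h2'
        omega
      rw [hsplit, Finset.sum_union hdisj]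
      have hswap : ∑ p ∈ Finset.univ.filter (fun p : Fin L × Fin L => p.2 < p.1),
          f p.1 p.2 = S := by
        rw [hS]
        refine Finset.sum_equiv (Equiv.prodComm (Fin L) (Fin L)) (fun p => ?_)
          (fun p _ => rectInter_comm _ _)
        simp
      rw [hswap, hS, two_mul]
    -- Step 3: counting identity
    have hcount : (L * (L - 1)) * C = L.factorial * (2 * S) := by
      rw [hC, perm_pair_count f hab₀, hW]
    -- Step 4: K * 2 = L * (L - 1)
    have hK : (∑ k : Fin (L - 1), (L - 1 - (k : ℕ))) * 2 = L * (L - 1) := by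
      obtain ⟨n, rfl⟩ : ∃ n, L = n + 1 := ⟨L - 1, by omega⟩
      simp only [Nat.add_sub_cancel]
      rw [Fin.sum_univ_eq_sum_range]
      simp only [Nat.add_sub_cancel]
      have hrefl : ∑ k ∈ Finset.range n, (n - k) = ∑ k ∈ Finset.range n, (k + 1) := by
        rw [← Finset.sum_range_reflect (fun k => k + 1) n]
        refine Finset.sum_congr rfl (fun i hi => ?_)
        have := Finset.mem_range.mp hi
        omega
      rw [hrefl]
      have h2' : ∑ k ∈ Finset.range n, (k + 1) = ∑ i ∈ Finset.range (n + 1), i := by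
        rw [Finset.sum_range_succ']; simp
      rw [h2', Finset.sum_range_id_mul_two]
      simp [Nat.mul_comm]
    -- conclude
    have key : ((∑ k : Fin (L - 1), (L - 1 - (k : ℕ))) * C) * 2
        = (L.factorial * S) * 2 := by
      calc ((∑ k : Fin (L - 1), (L - 1 - (k : ℕ))) * C) * 2
          = ((∑ k : Fin (L - 1), (L - 1 - (k : ℕ))) * 2) * C := by ring
        _ = (L * (L - 1)) * C := by rw [hK]
        _ = L.factorial * (2 * S) := hcount
        _ = (L.factorial * S) * 2 := by ring
    exact Nat.eq_of_mul_eq_mul_right (by norm_num) key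
end

section
/- Let X : Z^N → R be a function satisfying X(L + 2e_A) = X(L + e_{A-1} + e_{A+1}) + q^{ℓ_A + A} X(L) for all A = 1,...,N-1 and all L ∈ Z^N, where ℓ_A = ∑_{j=1}^N min{A,j} L_j and e_0 = 0. Then X satisfies the more general recurrence X(L + e_A + e_B) = X(L + e_{A-1} + e_{B+1}) + q^{ℓ_A + A} X(L + e_{B-A}) for all 1 ≤ A ≤ B < N and all L ∈ Z^N with L_1 = ··· = L_{B-1} = 0 whenever A < B. -/
/-- The canonical basis vectors of `ℤ^N` (supported on positive indices), with the
convention `e 0 = 0`. -/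
def eVec (i : ℕ) : ℕ → ℤ := fun j => if j = i ∧ i ≠ 0 then 1 else 0

/-- `ℓ_A(L) = ∑_{j=1}^N min{A,j} L_j`. -/
def ellA (N : ℕ) (A : ℕ) (L : ℕ → ℤ) : ℤ := ∑ j ∈ Finset.Icc 1 N, (min A j : ℤ) * L j

lemma ellA_add (N A : ℕ) (L M : ℕ → ℤ) :
    ellA N A (L + M) = ellA N A L + ellA N A M := by
  simp [ellA, mul_add, Finset.sum_add_distrib]

lemma ellA_sub (N A : ℕ) (L M : ℕ → ℤ) :
    ellA N A (L - M) = ellA N A L - ellA N A M := by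
  simp [ellA, mul_sub, Finset.sum_sub_distrib]

lemma ellA_eVec (N C i : ℕ) (h1 : 1 ≤ i) (h2 : i ≤ N) :
    ellA N C (eVec i) = (min C i : ℤ) := by
  rw [ellA, Finset.sum_eq_single i]
  · simp [eVec, Nat.one_le_iff_ne_zero.mp h1]
  · intro j _ hj
    simp [eVec, hj]
  · intro h
    exact absurd (Finset.mem_Icc.mpr ⟨h1, h2⟩) h

lemma eVec_zero : eVec 0 = 0 := by
  funext j; simp [eVec]

lemma ellA_split (N A B : ℕ) (L : ℕ → ℤ) (hAB : A ≤ B)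
    (hL : ∀ j, 1 ≤ j → j < B → L j = 0) :
    ellA N B L = ellA N A L + ellA N (B - A) L := by
  rw [ellA, ellA, ellA, ← Finset.sum_add_distrib]
  refine Finset.sum_congr rfl ?_
  intro j hj
  rw [Finset.mem_Icc] at hj
  by_cases h : j < B
  · rw [hL j hj.1 h]; ring
  · have hb : (B : ℤ) ≤ (j : ℤ) := by exact_mod_cast Nat.le_of_not_lt h
    have ha : (A : ℤ) ≤ (j : ℤ) := by exact_mod_cast hAB.trans (Nat.le_of_not_lt h)
    have hc : ((B - A : ℕ) : ℤ) ≤ (j : ℤ) := by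
      have : (B - A : ℕ) ≤ j := by omega
      exact_mod_cast this
    rw [min_eq_left hb, min_eq_left ha, min_eq_left hc, ← add_mul]
    congr 1
    push_cast [Nat.cast_sub hAB]
    ring


/-- If `X : ℤ^N → R` satisfies
`X(L + 2e_A) = X(L + e_{A-1} + e_{A+1}) + q^{ℓ_A(L)+A} X(L)` for all `1 ≤ A < N` and
all `L ∈ ℤ^N`, then it satisfies the more general recurrences
`X(L + e_A + e_B) = X(L + e_{A-1} + e_{B+1}) + q^{ℓ_A(L)+A} X(L + e_{B-A})`
for all `1 ≤ A ≤ B < N` and all `L ∈ ℤ^N` with `L_1 = ⋯ = L_{B-1} = 0` whenever `A < B`. -/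
theorem recurrence_extension {R : Type*} [CommRing R] (N : ℕ) (q : Rˣ)
    (X : (ℕ → ℤ) → R)
    (hX : ∀ A : ℕ, 1 ≤ A → A < N → ∀ L : ℕ → ℤ,
      X (L + eVec A + eVec A) =
        X (L + eVec (A - 1) + eVec (A + 1)) +
          ((q ^ (ellA N A L + (A : ℤ)) : Rˣ) : R) * X L) :
    ∀ A B : ℕ, 1 ≤ A → A ≤ B → B < N → ∀ L : ℕ → ℤ,
      (A < B → ∀ j, 1 ≤ j → j < B → L j = 0) →
      X (L + eVec A + eVec B) =
        X (L + eVec (A - 1) + eVec (B + 1)) +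
          ((q ^ (ellA N A L + (A : ℤ)) : Rˣ) : R) * X (L + eVec (B - A)) := by
  intro A B
  induction B using Nat.strong_induction_on generalizing A with
  | _ B IH =>
  intro hA hAB hBN L hL
  rcases eq_or_lt_of_le hAB with heq | hlt
  · subst heq
    rw [Nat.sub_self, eVec_zero, add_zero]
    exact hX A hA hBN L
  · -- A < B, so B ≥ 2
    have hB2 : 2 ≤ B := by omega
    have hB1 : B - 1 + 1 = B := by omega
    -- instance (A, B-1) at M = L + e_B - e_{B-1}
    have hMc : A < B - 1 → ∀ j, 1 ≤ j → j < B - 1 →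
        (L + eVec B - eVec (B - 1)) j = 0 := by
      intro _ j hj1 hj2
      have h1 : ¬(j = B ∧ B ≠ 0) := by omega
      have h2 : ¬(j = B - 1 ∧ B - 1 ≠ 0) := by omega
      simp only [Pi.add_apply, Pi.sub_apply, eVec, if_neg h1, if_neg h2,
        hL hlt j hj1 (by omega)]
      ring
    have hM := IH (B - 1) (by omega) A hA (by omega) (by omega)
      (L + eVec B - eVec (B - 1)) hMc
    rw [hB1] at hM
    have a1 : L + eVec B - eVec (B - 1) + eVec A + eVec (B - 1)
        = L + eVec A + eVec B := by ring
    have a2 : L + eVec B - eVec (B - 1) + eVec (A - 1) + eVec B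
        = L + eVec (A - 1) - eVec (B - 1) + eVec B + eVec B := by ring
    have a3 : L + eVec B - eVec (B - 1) + eVec (B - 1 - A)
        = L + eVec (B - 1 - A) + eVec B - eVec (B - 1) := by ring
    rw [a1, a2, a3] at hM
    have eM : ellA N A (L + eVec B - eVec (B - 1)) = ellA N A L := by
      rw [ellA_sub, ellA_add, ellA_eVec N A B (by omega) (by omega),
        ellA_eVec N A (B - 1) (by omega) (by omega)]
      have m1 : (A : ℤ) ⊓ (B : ℤ) = A := min_eq_left (by exact_mod_cast hAB)
      have m2 : (A : ℤ) ⊓ ((B - 1 : ℕ) : ℤ) = A := by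
        refine min_eq_left ?_
        have : A ≤ B - 1 := by omega
        exact_mod_cast this
      rw [m1, m2]; ring
    rw [eM] at hM
    -- base relation at B applied to L'' = L + e_{A-1} - e_{B-1}
    have hBase := hX B (by omega) hBN (L + eVec (A - 1) - eVec (B - 1))
    have b1 : L + eVec (A - 1) - eVec (B - 1) + eVec (B - 1) + eVec (B + 1)
        = L + eVec (A - 1) + eVec (B + 1) := by ring
    rw [b1] at hBase
    -- instance (B-A, B-1) at L - e_{B-1}
    have h3c : B - A < B - 1 → ∀ j, 1 ≤ j → j < B - 1 →
        (L - eVec (B - 1)) j = 0 := by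
      intro _ j hj1 hj2
      have h2 : ¬(j = B - 1 ∧ B - 1 ≠ 0) := by omega
      simp only [Pi.sub_apply, eVec, if_neg h2, hL hlt j hj1 (by omega)]
      ring
    have h3 := IH (B - 1) (by omega) (B - A) (by omega) (by omega) (by omega)
      (L - eVec (B - 1)) h3c
    rw [hB1] at h3
    have i1 : B - A - 1 = B - 1 - A := by omega
    have i2 : B - 1 - (B - A) = A - 1 := by omega
    rw [i1, i2] at h3
    have c1 : L - eVec (B - 1) + eVec (B - A) + eVec (B - 1) = L + eVec (B - A) := by ring
    have c2 : L - eVec (B - 1) + eVec (B - 1 - A) + eVec B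
        = L + eVec (B - 1 - A) + eVec B - eVec (B - 1) := by ring
    have c3 : L - eVec (B - 1) + eVec (A - 1) = L + eVec (A - 1) - eVec (B - 1) := by ring
    rw [c1, c2, c3] at h3
    -- exponent identity
    have hq : ((q ^ (ellA N B (L + eVec (A - 1) - eVec (B - 1)) + (B : ℤ)) : Rˣ) : R)
        = ((q ^ (ellA N A L + (A : ℤ)) : Rˣ) : R) *
          ((q ^ (ellA N (B - A) (L - eVec (B - 1)) + ((B - A : ℕ) : ℤ)) : Rˣ) : R) := by
      rw [← Units.val_mul, ← zpow_add]
      congr 2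
      rw [ellA_sub, ellA_add, ellA_sub,
        ellA_eVec N B (B - 1) (by omega) (by omega),
        ellA_eVec N (B - A) (B - 1) (by omega) (by omega),
        ellA_split N A B L (le_of_lt hlt) (hL hlt)]
      have m1 : (B : ℤ) ⊓ ((B - 1 : ℕ) : ℤ) = ((B - 1 : ℕ) : ℤ) := by
        refine min_eq_right ?_
        exact_mod_cast Nat.sub_le B 1
      have m2 : ((B - A : ℕ) : ℤ) ⊓ ((B - 1 : ℕ) : ℤ) = ((B - A : ℕ) : ℤ) := by
        refine min_eq_left ?_
        have : B - A ≤ B - 1 := by omega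
        exact_mod_cast this
      have m3 : ellA N B (eVec (A - 1)) = ((A - 1 : ℕ) : ℤ) := by
        rcases Nat.eq_or_lt_of_le hA with h1 | h1
        · rw [← h1]
          simp [eVec_zero, ellA]
        · rw [ellA_eVec N B (A - 1) (by omega) (by omega)]
          refine min_eq_right ?_
          have : A - 1 ≤ B := by omega
          exact_mod_cast this
      rw [m1, m2, m3]
      have e1 : ((A - 1 : ℕ) : ℤ) = (A : ℤ) - 1 := by
        have : (1:ℕ) ≤ A := hA
        push_cast [Nat.cast_sub this]; ring
      have e2 : ((B - 1 : ℕ) : ℤ) = (B : ℤ) - 1 := by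
        push_cast [Nat.cast_sub (by omega : (1:ℕ) ≤ B)]; ring
      rw [e1, e2]
      ring
    rw [hM, hBase, h3, hq]
    ring
end

section
/- At q = 1, the A_1 supernomial specializes to the coefficient in the expansion of a product of complete homogeneous symmetric polynomials in two variables: h_1^{L_1} ··· h_N^{L_N} = ∑_{λ_1+λ_2=ℓ_N} x_1^{λ_1} x_2^{λ_2} · S_1(L, λ_1 - ℓ_N/2), where h_k = ∑_{i=0}^k x_1^i x_2^{k-i}. -/
/-- `ℓ_i = ∑_{j=1}^N min{i,j} L_j`. -/
def ell (N : ℕ) (L : ℕ → ℕ) (i : ℕ) : ℕ := ∑ j ∈ Finset.Icc 1 N, min i j * L j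

/-- The A₁ supernomial at `q = 1`, parametrized by `b = λ₁ = a + ℓ_N/2`:
`S₁(L,a)|_{q=1} = ∑_{j₁+⋯+j_N=b} C(L_N,j_N) C(L_{N-1}+j_N,j_{N-1}) ⋯ C(L_1+j_2,j_1)`. -/
def S1one (N : ℕ) (L : ℕ → ℕ) (b : ℕ) : ℕ :=
  ∑ j ∈ Finset.Nat.antidiagonalTuple N b,
    (fun J : ℕ → ℕ => ∏ k ∈ Finset.Icc 1 N, Nat.choose (L k + J (k + 1)) (J k))
      (fun m => if h : 1 ≤ m ∧ m - 1 < N then j ⟨m - 1, h.2⟩ else 0)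

/-- The complete homogeneous symmetric polynomial of degree `k` in two variables. -/
noncomputable def hPoly (k : ℕ) : MvPolynomial (Fin 2) ℤ :=
  ∑ i ∈ Finset.range (k + 1), MvPolynomial.X 0 ^ i * MvPolynomial.X 1 ^ (k - i)

open Finset MvPolynomial

lemma sum_adT_snoc {M : Type*} [AddCommMonoid M] (n b : ℕ) (f : (Fin (n+1) → ℕ) → M) :
    ∑ j ∈ Finset.Nat.antidiagonalTuple (n+1) b, f j
      = ∑ p ∈ Finset.HasAntidiagonal.antidiagonal b, ∑ j' ∈ Finset.Nat.antidiagonalTuple n p.2,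
          f (Fin.snoc j' p.1) := by
  rw [Finset.sum_sigma']
  refine Finset.sum_nbij' (fun j => ⟨(j (Fin.last n), ∑ i : Fin n, j i.castSucc), Fin.init j⟩)
    (fun x => Fin.snoc x.2 x.1.1) ?_ ?_ ?_ ?_ ?_
  · intro j hj
    rw [Finset.Nat.mem_antidiagonalTuple] at hj
    simp only [Finset.mem_sigma, Finset.HasAntidiagonal.mem_antidiagonal, Finset.Nat.mem_antidiagonalTuple]
    constructor
    · rw [← hj, Fin.sum_univ_castSucc]; ring
    · rfl
  · intro x hx
    rw [Finset.mem_sigma, Finset.HasAntidiagonal.mem_antidiagonal, Finset.Nat.mem_antidiagonalTuple] at hx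
    rw [Finset.Nat.mem_antidiagonalTuple, Fin.sum_univ_castSucc]
    simp [Fin.snoc, hx.2, ← hx.1, add_comm]
  · intro j _; exact Fin.snoc_init_self j
  · intro x hx
    rw [Finset.mem_sigma, Finset.HasAntidiagonal.mem_antidiagonal, Finset.Nat.mem_antidiagonalTuple] at hx
    have h1 : Fin.init (Fin.snoc x.2 x.1.1 : Fin (n+1) → ℕ) = x.2 := Fin.init_snoc _ _
    have h2 : (Fin.snoc x.2 x.1.1 : Fin (n+1) → ℕ) (Fin.last n) = x.1.1 := Fin.snoc_last _ _
    have h3 : ∑ i : Fin n, (Fin.snoc x.2 x.1.1 : Fin (n+1) → ℕ) i.castSucc = x.1.2 := by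
      simp only [Fin.snoc_castSucc]; exact hx.2
    obtain ⟨⟨a,c⟩,j'⟩ := x
    simp only at h1 h2 h3 ⊢
    simp [h1, h2, h3]
    exact hx.2
  · intro j _; rw [Fin.snoc_init_self]

lemma S1one_succ (N : ℕ) (L : ℕ → ℕ) (b : ℕ) :
    S1one (N+1) L b = ∑ p ∈ Finset.HasAntidiagonal.antidiagonal b,
      Nat.choose (L (N+1)) p.1 * S1one N (Function.update L N (L N + p.1)) p.2 := by
  unfold S1one
  rw [sum_adT_snoc]
  refine Finset.sum_congr rfl fun p hp => ?_
  rw [Finset.mul_sum]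
  refine Finset.sum_congr rfl fun j' hj' => ?_
  simp only
  have hsnoc : ∀ (m : ℕ) (h2 : m - 1 < N + 1),
      (Fin.snoc j' p.1 : Fin (N+1) → ℕ) ⟨m-1, h2⟩
        = if h : m - 1 < N then j' ⟨m-1, h⟩ else p.1 := by
    intro m h2
    split
    · next h =>
      have he : (⟨m-1,h2⟩ : Fin (N+1)) = Fin.castSucc ⟨m-1,h⟩ := rfl
      rw [he, Fin.snoc_castSucc]
    · next h =>
      have he : (⟨m-1,h2⟩ : Fin (N+1)) = Fin.last N := by
        apply Fin.ext; simp only [Fin.val_last]; omega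
      rw [he, Fin.snoc_last]
  rw [Finset.prod_Icc_succ_top (Nat.le_add_left 1 N)]
  rw [mul_comm]
  congr 1
  · -- top factor
    have c1 : ¬ (1 ≤ N + 1 + 1 ∧ N + 1 + 1 - 1 < N + 1) := by omega
    have c2 : (1 ≤ N + 1 ∧ N + 1 - 1 < N + 1) := by omega
    rw [dif_neg c1, dif_pos c2, hsnoc]
    have : ¬ (N + 1 - 1 < N) := by omega
    rw [dif_neg this, Nat.add_zero]
  · refine Finset.prod_congr rfl fun k hk => ?_
    rw [Finset.mem_Icc] at hk
    obtain ⟨hk1, hk2⟩ := hk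
    have ck : (1 ≤ k ∧ k - 1 < N + 1) := by omega
    have ck1 : (1 ≤ k + 1 ∧ k + 1 - 1 < N + 1) := by omega
    have ck' : (1 ≤ k ∧ k - 1 < N) := by omega
    rw [dif_pos ck, dif_pos ck1, dif_pos ck', hsnoc, hsnoc]
    have hkm : k - 1 < N := by omega
    rw [dif_pos hkm]
    by_cases h : k + 1 - 1 < N
    · rw [dif_pos h]
      have hkN : k ≠ N := by omega
      rw [Function.update_of_ne hkN]
      have hc : (1 ≤ k + 1 ∧ k + 1 - 1 < N) := by omega
      rw [dif_pos hc]
    · rw [dif_neg h]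
      have hkN : k = N := by omega
      have hc : ¬ (1 ≤ k + 1 ∧ k + 1 - 1 < N) := by omega
      have hu : Function.update L N (L N + p.1) k = L k + p.1 := by
        rw [hkN, Function.update_self]
      rw [dif_neg hc, Nat.add_zero, hu]

lemma S1one_zero (L : ℕ → ℕ) (b : ℕ) : S1one 0 L b = if b = 0 then 1 else 0 := by
  unfold S1one
  cases b with
  | zero => rw [if_pos rfl]
            rw [show Finset.Nat.antidiagonalTuple 0 0 = {![]} from rfl]
            simp
  | succ n => rw [if_neg (Nat.succ_ne_zero n), Finset.Nat.antidiagonalTuple_zero_succ,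
                Finset.sum_empty]

lemma ell_eval (N : ℕ) (L : ℕ → ℕ) : ell N L N = ∑ j ∈ Finset.Icc 1 N, j * L j := by
  unfold ell
  refine Finset.sum_congr rfl fun j hj => ?_
  rw [Finset.mem_Icc] at hj
  rw [min_eq_right hj.2]

lemma ell_succ (N : ℕ) (L : ℕ → ℕ) :
    ell (N+1) L (N+1) = ell N L N + (N+1) * L (N+1) := by
  rw [ell_eval, ell_eval, Finset.sum_Icc_succ_top (Nat.le_add_left 1 N)]

lemma ell_update (N : ℕ) (L : ℕ → ℕ) (a : ℕ) :
    ell N (Function.update L N (L N + a)) N = ell N L N + N * a := by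
  cases N with
  | zero => simp [ell]
  | succ M =>
    rw [ell_eval, ell_eval]
    have hmem : M + 1 ∈ Finset.Icc 1 (M+1) := by rw [Finset.mem_Icc]; omega
    rw [← Finset.sum_erase_add _ _ hmem, ← Finset.sum_erase_add _ (fun j => j * L j) hmem]
    have : ∑ j ∈ (Finset.Icc 1 (M+1)).erase (M+1), j * Function.update L (M+1) (L (M+1) + a) j
        = ∑ j ∈ (Finset.Icc 1 (M+1)).erase (M+1), j * L j := by
      refine Finset.sum_congr rfl fun j hj => ?_
      rw [Function.update_of_ne (Finset.ne_of_mem_erase hj)]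
    rw [this, Function.update_self]
    ring

lemma hPoly_zero : hPoly 0 = 1 := by simp [hPoly]

lemma hPoly_succ (n : ℕ) :
    hPoly (n+1) = MvPolynomial.X 0 * hPoly n + MvPolynomial.X 1 ^ (n+1) := by
  unfold hPoly
  rw [Finset.sum_range_succ']
  simp only [pow_zero, one_mul, Nat.sub_zero, Finset.mul_sum]
  congr 1
  refine Finset.sum_congr rfl fun i hi => ?_
  rw [Finset.mem_range] at hi
  have : n + 1 - (i + 1) = n - i := by omega
  rw [this, pow_succ]
  ring

lemma S1one_eq_zero : ∀ (N : ℕ) (L : ℕ → ℕ) (b : ℕ), ell N L N < b → S1one N L b = 0 := by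
  intro N
  induction N with
  | zero =>
    intro L b hb
    rw [S1one_zero, if_neg]
    omega
  | succ M ih =>
    intro L b hb
    rw [S1one_succ]
    refine Finset.sum_eq_zero fun p hp => ?_
    rw [Finset.HasAntidiagonal.mem_antidiagonal] at hp
    by_cases hj : p.1 ≤ L (M+1)
    · have h2 : ell M (Function.update L M (L M + p.1)) M < p.2 := by
        rw [ell_update]
        have := ell_succ M L
        have hm1 : M * p.1 ≤ M * L (M+1) := Nat.mul_le_mul_left M hj
        have hm2 : (M+1) * L (M+1) = M * L (M+1) + L (M+1) := by ring
        omega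
      rw [ih _ _ h2, Nat.mul_zero]
    · rw [Nat.choose_eq_zero_of_lt (by omega), Nat.zero_mul]

lemma prod_hPoly_update (N : ℕ) (L : ℕ → ℕ) (a : ℕ) :
    ∏ k ∈ Finset.Icc 1 N, hPoly k ^ (Function.update L N (L N + a)) k
      = (∏ k ∈ Finset.Icc 1 N, hPoly k ^ L k) * hPoly N ^ a := by
  cases N with
  | zero => simp [hPoly_zero]
  | succ M =>
    have hmem : M + 1 ∈ Finset.Icc 1 (M+1) := by rw [Finset.mem_Icc]; omega
    rw [← Finset.mul_prod_erase _ _ hmem, ← Finset.mul_prod_erase _ (fun k => hPoly k ^ L k) hmem]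
    have he : ∏ k ∈ (Finset.Icc 1 (M+1)).erase (M+1),
        hPoly k ^ (Function.update L (M+1) (L (M+1) + a)) k
        = ∏ k ∈ (Finset.Icc 1 (M+1)).erase (M+1), hPoly k ^ L k := by
      refine Finset.prod_congr rfl fun k hk => ?_
      rw [Function.update_of_ne (Finset.ne_of_mem_erase hk)]
    rw [he, Function.update_self, pow_add]
    ring

/-- `h_1^{L_1} ⋯ h_N^{L_N} = ∑_{λ₁+λ₂=ℓ_N} x₁^{λ₁} x₂^{λ₂} S₁(L, λ₁ - ℓ_N/2)`:
the supernomials at `q = 1` are the expansion coefficients of products of complete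
homogeneous symmetric polynomials in two variables. -/
theorem supernomial_expansion (N : ℕ) (L : ℕ → ℕ) :
    ∏ k ∈ Finset.Icc 1 N, hPoly k ^ L k
      = ∑ b ∈ Finset.range (ell N L N + 1),
          (S1one N L b : MvPolynomial (Fin 2) ℤ) *
            MvPolynomial.X 0 ^ b * MvPolynomial.X 1 ^ (ell N L N - b) := by
  induction N generalizing L with
  | zero =>
    have h0 : ell 0 L 0 = 0 := by simp [ell]
    rw [h0]
    simp [S1one_zero]
  | succ N ih =>
    have hℓ'eq : ell (N+1) L (N+1) = ell N L N + (N+1) * L (N+1) := ell_succ N L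
    set M := L (N+1) with hM
    set ℓ := ell N L N with hℓ
    set ℓ' := ell (N+1) L (N+1) with hℓ'
    set T : ℕ × ℕ → MvPolynomial (Fin 2) ℤ := fun p =>
      ((Nat.choose M p.1 * S1one N (Function.update L N (L N + p.1)) p.2 : ℕ) :
        MvPolynomial (Fin 2) ℤ) * X 0 ^ (p.1 + p.2) * X 1 ^ (ℓ' - (p.1 + p.2)) with hT
    set R : Finset (ℕ × ℕ) := Finset.range (ℓ' + 1) ×ˢ Finset.range (ℓ' + 1) with hR
    have hmul2 : (N+1) * M = N * M + M := by ring
    have hzero : ∀ p : ℕ × ℕ, (M < p.1 ∨ ℓ + N * p.1 < p.2) → T p = 0 := by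
      intro p hp
      rcases hp with hp | hp
      · simp [hT, Nat.choose_eq_zero_of_lt hp]
      · have h : S1one N (Function.update L N (L N + p.1)) p.2 = 0 := by
          apply S1one_eq_zero
          rw [ell_update]
          omega
        simp [hT, h]
    have hzero' : ∀ p : ℕ × ℕ, ℓ' < p.1 + p.2 → T p = 0 := by
      intro p hp
      by_cases h1 : M < p.1
      · exact hzero p (Or.inl h1)
      · refine hzero p (Or.inr ?_)
        push_neg at h1
        have h2 : N * p.1 ≤ N * M := Nat.mul_le_mul_left N h1
        omega
    -- LHS
    have hLHS : ∏ k ∈ Finset.Icc 1 (N+1), hPoly k ^ L k = ∑ p ∈ R, T p := by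
      rw [Finset.prod_Icc_succ_top (Nat.le_add_left 1 N), hPoly_succ, add_pow, Finset.mul_sum]
      have hstep : ∀ j ∈ Finset.range (M+1),
          (∏ k ∈ Finset.Icc 1 N, hPoly k ^ L k) *
            ((X 0 * hPoly N) ^ j * (X 1 ^ (N+1)) ^ (M - j) *
              (Nat.choose M j : MvPolynomial (Fin 2) ℤ))
          = ∑ b' ∈ Finset.range (ℓ + N * j + 1), T (j, b') := by
        intro j hj
        rw [Finset.mem_range] at hj
        have hj' : j ≤ M := by omega
        have key : (∏ k ∈ Finset.Icc 1 N, hPoly k ^ L k) * hPoly N ^ j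
            = ∑ b' ∈ Finset.range (ℓ + N * j + 1),
                (S1one N (Function.update L N (L N + j)) b' : MvPolynomial (Fin 2) ℤ) *
                  X 0 ^ b' * X 1 ^ (ℓ + N * j - b') := by
          rw [← prod_hPoly_update N L j, ih (Function.update L N (L N + j)), ell_update]
        have lhs_eq : (∏ k ∈ Finset.Icc 1 N, hPoly k ^ L k) *
            ((X 0 * hPoly N) ^ j * (X 1 ^ (N+1)) ^ (M - j) *
              (Nat.choose M j : MvPolynomial (Fin 2) ℤ))
            = ((∏ k ∈ Finset.Icc 1 N, hPoly k ^ L k) * hPoly N ^ j) *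
              (X 0 ^ j * X 1 ^ ((N+1) * (M - j)) * (Nat.choose M j : MvPolynomial (Fin 2) ℤ)) := by
          rw [mul_pow, ← pow_mul]; ring
        rw [lhs_eq, key, Finset.sum_mul]
        refine Finset.sum_congr rfl fun b' hb' => ?_
        rw [Finset.mem_range] at hb'
        have hb'' : b' ≤ ℓ + N * j := by omega
        have hsplit : (N+1) * M = (N+1) * j + (N+1) * (M - j) := by
          rw [← Nat.mul_add]
          congr 1
          omega
        have hNj : (N+1) * j = N * j + j := by ring
        have e1 : ℓ' - (j + b') = (ℓ + N * j - b') + (N+1) * (M - j) := by omega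
        simp only [hT]
        rw [e1]
        push_cast
        ring
      rw [Finset.sum_congr rfl hstep]
      have hext1 : ∀ j ∈ Finset.range (M+1),
          ∑ b' ∈ Finset.range (ℓ + N * j + 1), T (j, b')
            = ∑ b' ∈ Finset.range (ℓ' + 1), T (j, b') := by
        intro j hj
        rw [Finset.mem_range] at hj
        refine Finset.sum_subset ?_ ?_
        · apply Finset.range_subset_range.2
          have h2 : N * j ≤ N * M := Nat.mul_le_mul_left N (by omega)
          omega
        · intro b' _ hb'
          rw [Finset.mem_range] at hb'
          push_neg at hb'
          have hlt : ℓ + N * j < b' := by omega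
          exact hzero (j, b') (Or.inr hlt)
      rw [Finset.sum_congr rfl hext1]
      have hext2 : ∑ j ∈ Finset.range (M+1), ∑ b' ∈ Finset.range (ℓ' + 1), T (j, b')
          = ∑ j ∈ Finset.range (ℓ' + 1), ∑ b' ∈ Finset.range (ℓ' + 1), T (j, b') := by
        refine Finset.sum_subset ?_ ?_
        · apply Finset.range_subset_range.2
          omega
        · intro j _ hj
          rw [Finset.mem_range] at hj
          push_neg at hj
          exact Finset.sum_eq_zero fun b' _ => hzero (j, b') (Or.inl (by omega))
      rw [hext2, hR, ← Finset.sum_product']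
    rw [hLHS]
    -- RHS
    have step1 : ∀ b ∈ Finset.range (ℓ' + 1),
        (S1one (N+1) L b : MvPolynomial (Fin 2) ℤ) * X 0 ^ b * X 1 ^ (ℓ' - b)
          = ∑ p ∈ Finset.HasAntidiagonal.antidiagonal b, T p := by
      intro b hb
      rw [S1one_succ, Nat.cast_sum, Finset.sum_mul, Finset.sum_mul]
      refine Finset.sum_congr rfl fun p hp => ?_
      rw [Finset.HasAntidiagonal.mem_antidiagonal] at hp
      simp only [hT]
      rw [hp]
    rw [Finset.sum_congr rfl step1, Finset.sum_sigma']
    have hfilter : ∑ p ∈ R, T p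
        = ∑ p ∈ R.filter (fun p => p.1 + p.2 ≤ ℓ'), T p := by
      rw [← Finset.sum_filter_add_sum_filter_not R (fun p => p.1 + p.2 ≤ ℓ') T]
      have hz2 : ∑ p ∈ R.filter (fun p => ¬ p.1 + p.2 ≤ ℓ'), T p = 0 :=
        Finset.sum_eq_zero fun p hp => hzero' p (by
          rw [Finset.mem_filter] at hp
          omega)
      rw [hz2, add_zero]
    rw [hfilter]
    refine Finset.sum_nbij' (fun p => ⟨p.1 + p.2, p⟩) (fun x => x.2) ?_ ?_ ?_ ?_ ?_
    · intro p hp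
      rw [Finset.mem_filter] at hp
      rw [Finset.mem_sigma, Finset.mem_range, Finset.HasAntidiagonal.mem_antidiagonal]
      refine ⟨?_, rfl⟩
      show p.1 + p.2 < ℓ' + 1
      omega
    · intro x hx
      rw [Finset.mem_sigma, Finset.mem_range, Finset.HasAntidiagonal.mem_antidiagonal] at hx
      rw [Finset.mem_filter, hR, Finset.mem_product, Finset.mem_range, Finset.mem_range]
      show (x.2.1 < ℓ' + 1 ∧ x.2.2 < ℓ' + 1) ∧ x.2.1 + x.2.2 ≤ ℓ'
      omega
    · intro p _
      rfl
    · intro x hx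
      rw [Finset.mem_sigma, Finset.mem_range, Finset.HasAntidiagonal.mem_antidiagonal] at hx
      obtain ⟨b, p⟩ := x
      simp only at hx ⊢
      rw [hx.2]
    · intro p _
      rfl
end

section
/- If w and w' are Knuth-equivalent words over a totally ordered alphabet, then for every k ≥ 1, the largest possible total length of k disjoint increasing subsequences of w equals that of w'. -/
/-- An elementary Knuth transformation on words:
`zxy ≡ xzy` for `x ≤ y < z` and `yxz ≡ yzx` for `x < y ≤ z`, applied in any context. -/
inductive KnuthStep {α : Type*} [LinearOrder α] : List α → List α → Prop
  | k1 (u v : List α) (x y z : α) (h1 : x ≤ y) (h2 : y < z) :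
      KnuthStep (u ++ z :: x :: y :: v) (u ++ x :: z :: y :: v)
  | k2 (u v : List α) (x y z : α) (h1 : x < y) (h2 : y ≤ z) :
      KnuthStep (u ++ y :: x :: z :: v) (u ++ y :: z :: x :: v)

/-- Knuth equivalence: the equivalence closure of the elementary Knuth transformations. -/
def KnuthEquiv {α : Type*} [LinearOrder α] : List α → List α → Prop :=
  Relation.EqvGen KnuthStep

/-- The positions in `S` form a (weakly) increasing subsequence of the word `w`. -/
def IncAlong {α : Type*} [LinearOrder α] (w : List α) (S : Finset ℕ) : Prop :=
  ∀ p ∈ S, ∀ q ∈ S, p < q →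
    ∀ (hp : p < w.length) (hq : q < w.length), w.get ⟨p, hp⟩ ≤ w.get ⟨q, hq⟩

/-- `Lval w k`: the largest possible total length of `k` pairwise disjoint (weakly)
increasing subsequences of the word `w`. -/
noncomputable def Lval {α : Type*} [LinearOrder α] (w : List α) (k : ℕ) : ℕ :=
  sSup {n | ∃ S : Fin k → Finset ℕ,
    (∀ i, S i ⊆ Finset.range w.length) ∧
    (∀ i j, i ≠ j → Disjoint (S i) (S j)) ∧
    (∀ i, IncAlong w (S i)) ∧
    ∑ i, (S i).card = n}

namespace Greene
set_option linter.unusedSectionVars false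
set_option linter.unnecessarySimpa false
variable {α : Type*} [LinearOrder α]

lemma len_mid (u v : List α) (a b c : α) :
    (u ++ a :: b :: c :: v).length = u.length + 3 + v.length := by
  simp [List.length_append]; ring

lemma lt_len (u v : List α) (a b c : α) {j : ℕ} (hj : j < 3) :
    u.length + j < (u ++ a :: b :: c :: v).length := by
  rw [len_mid]; omega

lemma getElem_left (u v : List α) (a b c : α) {i : ℕ} (h : i < u.length)
    (h' : i < (u ++ a :: b :: c :: v).length) :
    (u ++ a :: b :: c :: v)[i] = u[i] := List.getElem_append_left h

lemma getElem_p0 (u v : List α) (a b c : α)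
    (h' : u.length < (u ++ a :: b :: c :: v).length) :
    (u ++ a :: b :: c :: v)[u.length] = a := by
  rw [List.getElem_append_right (le_refl _)]; simp

lemma getElem_p1 (u v : List α) (a b c : α)
    (h' : u.length + 1 < (u ++ a :: b :: c :: v).length) :
    (u ++ a :: b :: c :: v)[u.length + 1] = b := by
  rw [List.getElem_append_right (by omega)]; simp

lemma getElem_p2 (u v : List α) (a b c : α)
    (h' : u.length + 2 < (u ++ a :: b :: c :: v).length) :
    (u ++ a :: b :: c :: v)[u.length + 2] = c := by
  rw [List.getElem_append_right (by omega)]; simp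

lemma getElem_right (u v : List α) (a b c : α) {i : ℕ} (h : u.length + 2 < i)
    (h' : i < (u ++ a :: b :: c :: v).length) :
    (u ++ a :: b :: c :: v)[i] =
      v[i - u.length - 3]'(by rw [len_mid] at h'; omega) := by
  rw [List.getElem_append_right (by omega)]
  set m := i - u.length - 3 with hm
  have h3 : i - u.length = m + 1 + 1 + 1 := by omega
  simp only [h3, List.getElem_cons_succ]
  congr 1

lemma getElem_outside (u v : List α) (a b c a' b' c' : α) {i : ℕ}
    (h : i < u.length ∨ u.length + 2 < i)
    (h1 : i < (u ++ a :: b :: c :: v).length)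
    (h2 : i < (u ++ a' :: b' :: c' :: v).length) :
    (u ++ a :: b :: c :: v)[i] = (u ++ a' :: b' :: c' :: v)[i] := by
  rcases h with h | h
  · rw [getElem_left u v a b c h, getElem_left u v a' b' c' h]
  · rw [getElem_right u v a b c h, getElem_right u v a' b' c' h]

lemma incAlong_iff (w : List α) (S : Finset ℕ) :
    IncAlong w S ↔ ∀ p ∈ S, ∀ q ∈ S, p < q →
      ∀ (hp : p < w.length) (hq : q < w.length), w[p] ≤ w[q] := by
  simp [IncAlong]

lemma inc_apply {w : List α} {S : Finset ℕ} (h : IncAlong w S) {m m' : ℕ}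
    (hm : m ∈ S) (hm' : m' ∈ S) (hlt : m < m')
    (h1 : m < w.length) (h2 : m' < w.length) : w[m] ≤ w[m'] := by
  simpa using h m hm m' hm' hlt h1 h2

/-- Swap lemma for words differing by transposing first two of the middle triple. -/
lemma val_swap01 (u v : List α) (a b c : α) (i : ℕ)
    (h1 : i < (u ++ a :: b :: c :: v).length)
    (h2 : Equiv.swap u.length (u.length + 1) i < (u ++ b :: a :: c :: v).length) :
    (u ++ b :: a :: c :: v)[Equiv.swap u.length (u.length + 1) i] =
      (u ++ a :: b :: c :: v)[i] := by
  rcases eq_or_ne i u.length with rfl | hip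
  · simp only [Equiv.swap_apply_left]
    rw [getElem_p1 u v b a c (by simpa using h2), getElem_p0 u v a b c (by omega)]
  rcases eq_or_ne i (u.length + 1) with rfl | hip1
  · simp only [Equiv.swap_apply_right]
    rw [getElem_p0 u v b a c (by simpa using h2), getElem_p1 u v a b c (by omega)]
  · simp only [Equiv.swap_apply_of_ne_of_ne hip hip1] at h2 ⊢
    rcases eq_or_ne i (u.length + 2) with rfl | hip2
    · rw [getElem_p2 u v b a c (by omega), getElem_p2 u v a b c (by omega)]
    · exact (getElem_outside u v b a c a b c (by omega) h2 h1)

/-- Swap lemma for words differing by transposing last two of the middle triple. -/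
lemma val_swap12 (u v : List α) (a b c : α) (i : ℕ)
    (h1 : i < (u ++ a :: b :: c :: v).length)
    (h2 : Equiv.swap (u.length + 1) (u.length + 2) i < (u ++ a :: c :: b :: v).length) :
    (u ++ a :: c :: b :: v)[Equiv.swap (u.length + 1) (u.length + 2) i] =
      (u ++ a :: b :: c :: v)[i] := by
  rcases eq_or_ne i (u.length + 1) with rfl | hip
  · simp only [Equiv.swap_apply_left]
    rw [getElem_p2 u v a c b (by simpa using h2), getElem_p1 u v a b c (by omega)]
  rcases eq_or_ne i (u.length + 2) with rfl | hip1
  · simp only [Equiv.swap_apply_right]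
    rw [getElem_p1 u v a c b (by simpa using h2), getElem_p2 u v a b c (by omega)]
  · simp only [Equiv.swap_apply_of_ne_of_ne hip hip1] at h2 ⊢
    rcases eq_or_ne i u.length with rfl | hip2
    · rw [getElem_p0 u v a c b (by omega), getElem_p0 u v a b c (by omega)]
    · exact (getElem_outside u v a c b a b c (by omega) h2 h1)

end Greene

namespace Greene
variable {α : Type*} [LinearOrder α]

def Fam (w : List α) {k : ℕ} (S : Fin k → Finset ℕ) : Prop :=
  (∀ i, S i ⊆ Finset.range w.length) ∧
  (∀ i j, i ≠ j → Disjoint (S i) (S j)) ∧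
  (∀ i, IncAlong w (S i))

lemma lval_eq_of_transfer (w w' : List α) (k : ℕ)
    (h1 : ∀ S : Fin k → Finset ℕ, Fam w S →
      ∃ T : Fin k → Finset ℕ, Fam w' T ∧ ∑ i, (T i).card = ∑ i, (S i).card)
    (h2 : ∀ S : Fin k → Finset ℕ, Fam w' S →
      ∃ T : Fin k → Finset ℕ, Fam w T ∧ ∑ i, (T i).card = ∑ i, (S i).card) :
    Lval w k = Lval w' k := by
  unfold Lval
  congr 1
  ext n
  simp only [Set.mem_setOf_eq]
  constructor
  · rintro ⟨S, hsub, hdis, hinc, rfl⟩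
    obtain ⟨T, ⟨a, b, c⟩, hcard⟩ := h1 S ⟨hsub, hdis, hinc⟩
    exact ⟨T, a, b, c, hcard⟩
  · rintro ⟨S, hsub, hdis, hinc, rfl⟩
    obtain ⟨T, ⟨a, b, c⟩, hcard⟩ := h2 S ⟨hsub, hdis, hinc⟩
    exact ⟨T, a, b, c, hcard⟩

lemma fam_swap (w w' : List α) (q : ℕ) (hlen : w'.length = w.length) (hq : q + 1 < w.length)
    (hval : ∀ i (h1 : i < w.length) (h2 : (Equiv.swap q (q+1)) i < w'.length),
      w'[(Equiv.swap q (q+1)) i] = w[i])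
    {k : ℕ} (S : Fin k → Finset ℕ) (hS : Fam w S)
    (hbad : ∀ i, ¬(q ∈ S i ∧ q + 1 ∈ S i)) :
    ∃ T : Fin k → Finset ℕ, Fam w' T ∧ ∑ i, (T i).card = ∑ i, (S i).card := by
  classical
  set σ := Equiv.swap q (q+1) with hσ
  have hσq : σ q = q + 1 := Equiv.swap_apply_left _ _
  have hσq1 : σ (q+1) = q := Equiv.swap_apply_right _ _
  have hσlt : ∀ i, i < w.length → σ i < w.length := by
    intro i hi
    rcases eq_or_ne i q with rfl | h1
    · rw [hσq]; exact hq
    rcases eq_or_ne i (q+1) with rfl | h2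
    · rw [hσq1]; omega
    · rw [Equiv.swap_apply_of_ne_of_ne h1 h2]; exact hi
  have hval2 : ∀ i : ℕ, σ i = if i = q then q+1 else if i = q+1 then q else i := by
    intro i
    split_ifs with ha hb
    · rw [ha, hσq]
    · rw [hb, hσq1]
    · exact Equiv.swap_apply_of_ne_of_ne ha hb
  have hmono : ∀ m n : ℕ, σ m < σ n → m < n ∨ (m = q + 1 ∧ n = q) := by
    intro m n h
    rw [hval2 m, hval2 n] at h
    split_ifs at h <;> omega
  obtain ⟨hsub, hdis, hinc⟩ := hS
  refine ⟨fun i => (S i).image σ, ⟨?_, ?_, ?_⟩, ?_⟩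
  · intro i m hm
    rw [Finset.mem_image] at hm
    obtain ⟨s, hs, rfl⟩ := hm
    rw [Finset.mem_range, hlen]
    exact hσlt s (Finset.mem_range.1 (hsub i hs))
  · intro i j hij
    exact (Finset.disjoint_image σ.injective).2 (hdis i j hij)
  · intro i
    rw [incAlong_iff]
    rintro a ha b hb hab hpa hpb
    rw [Finset.mem_image] at ha hb
    obtain ⟨s, hs, rfl⟩ := ha
    obtain ⟨t, ht, rfl⟩ := hb
    have hsl : s < w.length := Finset.mem_range.1 (hsub i hs)
    have htl : t < w.length := Finset.mem_range.1 (hsub i ht)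
    rw [hval s hsl hpa, hval t htl hpb]
    rcases hmono s t hab with h | ⟨rfl, rfl⟩
    · exact inc_apply (hinc i) hs ht h hsl htl
    · exact absurd ⟨ht, hs⟩ (hbad i)
  · exact Finset.sum_congr rfl fun i _ => Finset.card_image_of_injective _ σ.injective

end Greene

namespace Greene
variable {α : Type*} [LinearOrder α]

lemma card_three {F M T : Finset ℕ} (h1 : Disjoint F M) (h2 : Disjoint F T)
    (h3 : Disjoint M T) : (F ∪ M ∪ T).card = F.card + M.card + T.card := by
  rw [Finset.card_union_of_disjoint (Finset.disjoint_union_left.2 ⟨h2, h3⟩),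
    Finset.card_union_of_disjoint h1]

lemma dis_of_ne {s t : Finset ℕ} (h : ∀ m ∈ s, ∀ m' ∈ t, m ≠ m') : Disjoint s t := by
  rw [Finset.disjoint_left]
  intro m hm hm'
  exact h m hm m hm' rfl

lemma sum_card_two_swap {k : ℕ} (g : Fin k → ℕ) (i₀ j₀ : Fin k) (hne : i₀ ≠ j₀) (a b : ℕ)
    (h : a + b = g i₀ + g j₀) :
    ∑ i, (if i = i₀ then a else if i = j₀ then b else g i) = ∑ i, g i := by
  classical
  have e1 : (fun i => if i = i₀ then a else if i = j₀ then b else g i)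
      = Function.update (Function.update g j₀ b) i₀ a := by
    funext i
    rcases eq_or_ne i i₀ with rfl | h1
    · simp
    · rcases eq_or_ne i j₀ with rfl | h2
      · simp [h1, Function.update_of_ne h1]
      · simp [h1, h2, Function.update_of_ne h1, Function.update_of_ne h2]
  have e2 : g = Function.update (Function.update g j₀ (g j₀)) i₀ (g i₀) := by
    simp
  rw [show ∑ i, (if i = i₀ then a else if i = j₀ then b else g i)
      = ∑ i, (Function.update (Function.update g j₀ b) i₀ a) i from by rw [e1]]
  conv_rhs => rw [e2]
  rw [Finset.sum_update_of_mem (Finset.mem_univ i₀),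
    Finset.sum_update_of_mem (Finset.mem_univ i₀)]
  have hj : j₀ ∈ Finset.univ \ {i₀} := by simp [hne.symm]
  rw [Finset.sum_update_of_mem hj, Finset.sum_update_of_mem hj]
  omega

lemma sum_card_one {k : ℕ} (g : Fin k → ℕ) (i₀ : Fin k) (a : ℕ) (h : a = g i₀) :
    ∑ i, (if i = i₀ then a else g i) = ∑ i, g i := by
  refine Finset.sum_congr rfl fun i _ => ?_
  split_ifs with h1
  · rw [h1, h]
  · rfl

end Greene

namespace Greene
variable {α : Type*} [LinearOrder α]

lemma normalize_k1 (u v : List α) (x y z : α) (hxy : x ≤ y) (hyz : y < z)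
    {k : ℕ} (S : Fin k → Finset ℕ) (hS : Fam (u ++ x :: z :: y :: v) S) :
    ∃ T : Fin k → Finset ℕ, Fam (u ++ x :: z :: y :: v) T ∧
      (∑ i, (T i).card = ∑ i, (S i).card) ∧
      ∀ i, ¬(u.length ∈ T i ∧ u.length + 1 ∈ T i) := by
  classical
  set w := u ++ x :: z :: y :: v with hw
  set p := u.length with hp
  obtain ⟨hsub, hdis, hinc⟩ := hS
  have hl : w.length = p + 3 + v.length := len_mid u v x z y
  have hlp0 : p < w.length := by omega
  have hlp1 : p + 1 < w.length := by omega
  have hlp2 : p + 2 < w.length := by omega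
  have wp0 : w[p] = x := getElem_p0 u v x z y hlp0
  have wp1 : w[p+1] = z := getElem_p1 u v x z y hlp1
  have wp2 : w[p+2] = y := getElem_p2 u v x z y hlp2
  have hmem : ∀ i m, m ∈ S i → m < w.length := fun i m hm =>
    Finset.mem_range.1 (hsub i hm)
  by_cases hbad : ∃ i, p ∈ S i ∧ p + 1 ∈ S i
  swap
  · exact ⟨S, ⟨hsub, hdis, hinc⟩, rfl, fun i hcon => hbad ⟨i, hcon⟩⟩
  obtain ⟨i₀, hip, hip1⟩ := hbad
  have hnp2 : p + 2 ∉ S i₀ := by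
    intro hcon
    have h1 := inc_apply (hinc i₀) hip1 hcon (by omega) hlp1 hlp2
    rw [wp1, wp2] at h1
    exact absurd h1 (not_le.2 hyz)
  -- value facts
  have vF₁ : ∀ m, m ∈ S i₀ → m ≤ p → ∀ (h : m < w.length), w[m] ≤ x := by
    intro m hm hle hh
    rcases eq_or_ne m p with rfl | hne'
    · rw [wp0]
    · have h1 := inc_apply (hinc i₀) hm hip (by omega) hh hlp0
      rwa [wp0] at h1
  have vT₁ : ∀ m, m ∈ S i₀ → p + 2 < m → ∀ (h : m < w.length), z ≤ w[m] := by
    intro m hm hgt hh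
    have h1 := inc_apply (hinc i₀) hip1 hm (by omega) hlp1 hh
    rwa [wp1] at h1
  by_cases hj : ∃ j, p + 2 ∈ S j
  · obtain ⟨j₀, hj2⟩ := hj
    have hne : j₀ ≠ i₀ := by rintro rfl; exact hnp2 hj2
    have hd := hdis i₀ j₀ (Ne.symm hne)
    have hdl : ∀ m, m ∈ S i₀ → m ∉ S j₀ := fun m hm => Finset.disjoint_left.1 hd hm
    have hjp : p ∉ S j₀ := fun h => hdl p hip h
    have hjp1 : p + 1 ∉ S j₀ := fun h => hdl _ hip1 h
    have vF₂ : ∀ m, m ∈ S j₀ → m < p → ∀ (h : m < w.length), w[m] ≤ y := by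
      intro m hm hlt hh
      have h1 := inc_apply (hinc j₀) hm hj2 (by omega) hh hlp2
      rwa [wp2] at h1
    have vT₂ : ∀ m, m ∈ S j₀ → p + 2 < m → ∀ (h : m < w.length), y ≤ w[m] := by
      intro m hm hgt hh
      have h1 := inc_apply (hinc j₀) hj2 hm (by omega) hlp2 hh
      rwa [wp2] at h1
    set F₁ := (S i₀).filter (fun m => m ≤ p) with hF₁
    set T₁ := (S i₀).filter (fun m => p + 2 < m) with hT₁
    set F₂ := (S j₀).filter (fun m => m < p) with hF₂
    set T₂ := (S j₀).filter (fun m => p + 2 < m) with hT₂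
    set A := F₁ ∪ {p+2} ∪ T₂ with hA
    set B := F₂ ∪ {p+1} ∪ T₁ with hB
    have hmA : ∀ m, m ∈ A ↔ (m ∈ S i₀ ∧ m ≤ p) ∨ m = p + 2 ∨ (m ∈ S j₀ ∧ p + 2 < m) := by
      intro m
      simp only [hA, Finset.mem_union, Finset.mem_singleton, hF₁, hT₂, Finset.mem_filter,
        or_assoc]
    have hmB : ∀ m, m ∈ B ↔ (m ∈ S j₀ ∧ m < p) ∨ m = p + 1 ∨ (m ∈ S i₀ ∧ p + 2 < m) := by
      intro m
      simp only [hB, Finset.mem_union, Finset.mem_singleton, hF₂, hT₁, Finset.mem_filter,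
        or_assoc]
    have eS1 : S i₀ = F₁ ∪ {p+1} ∪ T₁ := by
      ext m
      rw [Finset.mem_union, Finset.mem_union, Finset.mem_singleton, hF₁, hT₁,
        Finset.mem_filter, Finset.mem_filter]
      constructor
      · intro hm
        by_cases h1 : m ≤ p
        · exact Or.inl (Or.inl ⟨hm, h1⟩)
        by_cases h2 : m = p + 1
        · exact Or.inl (Or.inr h2)
        · have hm2 : m ≠ p + 2 := fun h => hnp2 (h ▸ hm)
          exact Or.inr ⟨hm, by omega⟩
      · rintro ((⟨h, _⟩ | h) | ⟨h, _⟩)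
        · exact h
        · rw [h]; exact hip1
        · exact h
    have eS2 : S j₀ = F₂ ∪ {p+2} ∪ T₂ := by
      ext m
      rw [Finset.mem_union, Finset.mem_union, Finset.mem_singleton, hF₂, hT₂,
        Finset.mem_filter, Finset.mem_filter]
      constructor
      · intro hm
        by_cases h1 : m < p
        · exact Or.inl (Or.inl ⟨hm, h1⟩)
        by_cases h2 : m = p + 2
        · exact Or.inl (Or.inr h2)
        · have hm2 : m ≠ p := fun h => hjp (h ▸ hm)
          have hm3 : m ≠ p + 1 := fun h => hjp1 (h ▸ hm)
          exact Or.inr ⟨hm, by omega⟩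
      · rintro ((⟨h, _⟩ | h) | ⟨h, _⟩)
        · exact h
        · rw [h]; exact hj2
        · exact h
    -- piece bounds
    have bF₁ : ∀ m ∈ F₁, m ≤ p := fun m hm => (Finset.mem_filter.1 hm).2
    have bT₁ : ∀ m ∈ T₁, p + 2 < m := fun m hm => (Finset.mem_filter.1 hm).2
    have bF₂ : ∀ m ∈ F₂, m < p := fun m hm => (Finset.mem_filter.1 hm).2
    have bT₂ : ∀ m ∈ T₂, p + 2 < m := fun m hm => (Finset.mem_filter.1 hm).2
    -- cards
    have cS1 : (S i₀).card = F₁.card + 1 + T₁.card := by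
      rw [eS1, card_three
        (dis_of_ne fun m hm m' hm' => by have := bF₁ m hm; rw [Finset.mem_singleton] at hm'; omega)
        (dis_of_ne fun m hm m' hm' => by have := bF₁ m hm; have := bT₁ m' hm'; omega)
        (dis_of_ne fun m hm m' hm' => by rw [Finset.mem_singleton] at hm; have := bT₁ m' hm'; omega)]
      simp
    have cS2 : (S j₀).card = F₂.card + 1 + T₂.card := by
      rw [eS2, card_three
        (dis_of_ne fun m hm m' hm' => by have := bF₂ m hm; rw [Finset.mem_singleton] at hm'; omega)
        (dis_of_ne fun m hm m' hm' => by have := bF₂ m hm; have := bT₂ m' hm'; omega)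
        (dis_of_ne fun m hm m' hm' => by rw [Finset.mem_singleton] at hm; have := bT₂ m' hm'; omega)]
      simp
    have cA : A.card = F₁.card + 1 + T₂.card := by
      rw [hA, card_three
        (dis_of_ne fun m hm m' hm' => by have := bF₁ m hm; rw [Finset.mem_singleton] at hm'; omega)
        (dis_of_ne fun m hm m' hm' => by have := bF₁ m hm; have := bT₂ m' hm'; omega)
        (dis_of_ne fun m hm m' hm' => by rw [Finset.mem_singleton] at hm; have := bT₂ m' hm'; omega)]
      simp
    have cB : B.card = F₂.card + 1 + T₁.card := by
      rw [hB, card_three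
        (dis_of_ne fun m hm m' hm' => by have := bF₂ m hm; rw [Finset.mem_singleton] at hm'; omega)
        (dis_of_ne fun m hm m' hm' => by have := bF₂ m hm; have := bT₁ m' hm'; omega)
        (dis_of_ne fun m hm m' hm' => by rw [Finset.mem_singleton] at hm; have := bT₁ m' hm'; omega)]
      simp
    refine ⟨fun i => if i = i₀ then A else if i = j₀ then B else S i, ⟨?_, ?_, ?_⟩, ?_, ?_⟩
    · -- subsets of range
      intro i m hm
      rw [Finset.mem_range]
      dsimp only at hm
      split_ifs at hm with h1 h2
      · rcases (hmA m).1 hm with ⟨h, hb⟩ | rfl | ⟨h, hb⟩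
        · exact hmem i₀ m h
        · exact hlp2
        · exact hmem j₀ m h
      · rcases (hmB m).1 hm with ⟨h, hb⟩ | rfl | ⟨h, hb⟩
        · exact hmem j₀ m h
        · exact hlp1
        · exact hmem i₀ m h
      · exact hmem i m hm
    · -- disjointness
      have dAB : Disjoint A B := by
        rw [Finset.disjoint_left]
        intro m hm hm'
        rcases (hmA m).1 hm with ⟨hA1, hA2⟩ | heqA | ⟨hA1, hA2⟩ <;>
          rcases (hmB m).1 hm' with ⟨hB1, hB2⟩ | heqB | ⟨hB1, hB2⟩ <;>
          try omega
        · exact hdl m hA1 hB1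
        · exact hdl m hB1 hA1
      have dAS : ∀ jj, jj ≠ i₀ → jj ≠ j₀ → Disjoint A (S jj) := by
        intro jj h1 h2
        rw [Finset.disjoint_left]
        intro m hm hm'
        have hd1 := Finset.disjoint_left.1 (hdis i₀ jj (Ne.symm h1))
        have hd2 := Finset.disjoint_left.1 (hdis j₀ jj (Ne.symm h2))
        rcases (hmA m).1 hm with ⟨h, _⟩ | rfl | ⟨h, _⟩
        · exact hd1 h hm'
        · exact hd2 hj2 hm'
        · exact hd2 h hm'
      have dBS : ∀ jj, jj ≠ i₀ → jj ≠ j₀ → Disjoint B (S jj) := by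
        intro jj h1 h2
        rw [Finset.disjoint_left]
        intro m hm hm'
        have hd1 := Finset.disjoint_left.1 (hdis i₀ jj (Ne.symm h1))
        have hd2 := Finset.disjoint_left.1 (hdis j₀ jj (Ne.symm h2))
        rcases (hmB m).1 hm with ⟨h, _⟩ | rfl | ⟨h, _⟩
        · exact hd2 h hm'
        · exact hd1 hip1 hm'
        · exact hd1 h hm'
      intro i j hij
      dsimp only
      rcases eq_or_ne i i₀ with hi1 | hi1
      · rw [if_pos hi1]
        rcases eq_or_ne j i₀ with hj1 | hj1
        · exact absurd (hi1.trans hj1.symm) hij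
        rcases eq_or_ne j j₀ with hjj | hjj
        · rw [if_neg hj1, if_pos hjj]
          exact dAB
        · rw [if_neg hj1, if_neg hjj]
          exact dAS j hj1 hjj
      rcases eq_or_ne i j₀ with hi2 | hi2
      · rw [if_neg hi1, if_pos hi2]
        rcases eq_or_ne j i₀ with hj1 | hj1
        · rw [if_pos hj1]
          exact dAB.symm
        rcases eq_or_ne j j₀ with hjj | hjj
        · exact absurd (hi2.trans hjj.symm) hij
        · rw [if_neg hj1, if_neg hjj]
          exact dBS j hj1 hjj
      · rw [if_neg hi1, if_neg hi2]
        rcases eq_or_ne j i₀ with hj1 | hj1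
        · rw [if_pos hj1]
          exact (dAS i hi1 hi2).symm
        rcases eq_or_ne j j₀ with hjj | hjj
        · rw [if_neg hj1, if_pos hjj]
          exact (dBS i hi1 hi2).symm
        · rw [if_neg hj1, if_neg hjj]
          exact hdis i j hij
    · -- IncAlong
      intro i
      rw [incAlong_iff]
      intro m hm m' hm' hlt hb1 hb2
      dsimp only at hm hm'
      split_ifs at hm hm' with h1
      · -- both in A
        rcases (hmA m).1 hm with ⟨hA1, hA2⟩ | heq | ⟨hA1, hA2⟩ <;>
          rcases (hmA m').1 hm' with ⟨hB1, hB2⟩ | heq' | ⟨hB1, hB2⟩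
        · exact inc_apply (hinc i₀) hA1 hB1 hlt hb1 hb2
        · subst heq'; rw [wp2]; exact le_trans (vF₁ m hA1 hA2 hb1) hxy
        · exact le_trans (vF₁ m hA1 hA2 hb1) (le_trans hxy (vT₂ m' hB1 hB2 hb2))
        · omega
        · omega
        · subst heq; rw [wp2]; exact vT₂ m' hB1 hB2 hb2
        · omega
        · omega
        · exact inc_apply (hinc j₀) hA1 hB1 hlt hb1 hb2
      · -- both in B
        rcases (hmB m).1 hm with ⟨hA1, hA2⟩ | heq | ⟨hA1, hA2⟩ <;>
          rcases (hmB m').1 hm' with ⟨hB1, hB2⟩ | heq' | ⟨hB1, hB2⟩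
        · exact inc_apply (hinc j₀) hA1 hB1 hlt hb1 hb2
        · subst heq'; rw [wp1]; exact le_trans (vF₂ m hA1 hA2 hb1) (le_of_lt hyz)
        · exact le_trans (vF₂ m hA1 hA2 hb1) (le_trans (le_of_lt hyz) (vT₁ m' hB1 hB2 hb2))
        · omega
        · omega
        · subst heq; rw [wp1]; exact vT₁ m' hB1 hB2 hb2
        · omega
        · omega
        · exact inc_apply (hinc i₀) hA1 hB1 hlt hb1 hb2
      · exact inc_apply (hinc i) hm hm' hlt hb1 hb2
    · -- sum
      simp only [apply_ite Finset.card]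
      exact sum_card_two_swap _ i₀ j₀ (Ne.symm hne) _ _ (by omega)
    · -- no bad pattern
      intro i
      dsimp only
      split_ifs with h1 h2
      · rintro ⟨-, hcon⟩
        rcases (hmA _).1 hcon with ⟨-, hb⟩ | he | ⟨-, hb⟩ <;> omega
      · rintro ⟨hcon, -⟩
        rcases (hmB _).1 hcon with ⟨-, hb⟩ | he | ⟨-, hb⟩ <;> omega
      · rintro ⟨hcon, -⟩
        exact Finset.disjoint_left.1 (hdis i i₀ h1) hcon hip
  · -- no set contains p+2
    push_neg at hj
    set A := ((S i₀).erase (p+1)) ∪ {p+2} with hA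
    have hmA : ∀ m, m ∈ A ↔ (m ≠ p + 1 ∧ m ∈ S i₀) ∨ m = p + 2 := by
      intro m
      simp only [hA, Finset.mem_union, Finset.mem_erase, Finset.mem_singleton]
    have cA : A.card = (S i₀).card := by
      rw [hA, Finset.card_union_of_disjoint (by
        rw [Finset.disjoint_left]
        intro m hm hm'
        rw [Finset.mem_singleton] at hm'
        exact hj i₀ (hm' ▸ (Finset.mem_erase.1 hm).2)),
        Finset.card_erase_of_mem hip1, Finset.card_singleton]
      have := Finset.card_ne_zero_of_mem hip1
      omega
    refine ⟨fun i => if i = i₀ then A else S i, ⟨?_, ?_, ?_⟩, ?_, ?_⟩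
    · intro i m hm
      rw [Finset.mem_range]
      dsimp only at hm
      split_ifs at hm with h1
      · rcases (hmA m).1 hm with ⟨-, h⟩ | rfl
        · exact hmem i₀ m h
        · exact hlp2
      · exact hmem i m hm
    · have dAS : ∀ jj, jj ≠ i₀ → Disjoint A (S jj) := by
        intro jj h1
        rw [Finset.disjoint_left]
        intro m hm hm'
        rcases (hmA m).1 hm with ⟨-, h⟩ | rfl
        · exact Finset.disjoint_left.1 (hdis i₀ jj (Ne.symm h1)) h hm'
        · exact hj jj hm'
      intro i j hij
      dsimp only
      split_ifs with h1 h2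
      · exact absurd (h1.trans h2.symm) hij
      · exact dAS j h2
      · exact (dAS i h1).symm
      · exact hdis i j hij
    · intro i
      rw [incAlong_iff]
      intro m hm m' hm' hlt hb1 hb2
      dsimp only at hm hm'
      split_ifs at hm hm' with h1
      · rcases (hmA m).1 hm with ⟨hA1, hA2⟩ | heq <;>
          rcases (hmA m').1 hm' with ⟨hB1, hB2⟩ | heq'
        · exact inc_apply (hinc i₀) hA2 hB2 hlt hb1 hb2
        · -- m' = p+2, m ∈ S i₀, m ≠ p+1, m < p+2 so m ≤ p
          have hmp2 : m ≠ p + 2 := fun h => hj i₀ (h ▸ hA2)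
          subst heq'
          rw [wp2]
          exact le_trans (vF₁ m hA2 (by omega) hb1) hxy
        · -- m = p+2, m' ∈ S i₀, m' > p+2
          have hmp2 : m' ≠ p + 2 := fun h => hj i₀ (h ▸ hB2)
          subst heq
          rw [wp2]
          exact le_trans (le_of_lt hyz) (vT₁ m' hB2 (by omega) hb2)
        · omega
      · exact inc_apply (hinc i) hm hm' hlt hb1 hb2
    · simp only [apply_ite Finset.card]
      exact sum_card_one _ i₀ _ cA
    · intro i
      dsimp only
      split_ifs with h1
      · rintro ⟨-, hcon⟩
        rcases (hmA _).1 hcon with ⟨hne', -⟩ | he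
        · exact hne' rfl
        · omega
      · rintro ⟨hcon, -⟩
        exact Finset.disjoint_left.1 (hdis i i₀ h1) hcon hip

end Greene

namespace Greene
variable {α : Type*} [LinearOrder α]

lemma normalize_k2 (u v : List α) (x y z : α) (hxy : x < y) (hyz : y ≤ z)
    {k : ℕ} (S : Fin k → Finset ℕ) (hS : Fam (u ++ y :: x :: z :: v) S) :
    ∃ T : Fin k → Finset ℕ, Fam (u ++ y :: x :: z :: v) T ∧
      (∑ i, (T i).card = ∑ i, (S i).card) ∧
      ∀ i, ¬(u.length + 1 ∈ T i ∧ u.length + 2 ∈ T i) := by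
  classical
  set w := u ++ y :: x :: z :: v with hw
  set p := u.length with hp
  obtain ⟨hsub, hdis, hinc⟩ := hS
  have hl : w.length = p + 3 + v.length := len_mid u v y x z
  have hlp0 : p < w.length := by omega
  have hlp1 : p + 1 < w.length := by omega
  have hlp2 : p + 2 < w.length := by omega
  have wp0 : w[p] = y := getElem_p0 u v y x z hlp0
  have wp1 : w[p+1] = x := getElem_p1 u v y x z hlp1
  have wp2 : w[p+2] = z := getElem_p2 u v y x z hlp2
  have hmem : ∀ i m, m ∈ S i → m < w.length := fun i m hm =>
    Finset.mem_range.1 (hsub i hm)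
  by_cases hbad : ∃ i, p + 1 ∈ S i ∧ p + 2 ∈ S i
  swap
  · exact ⟨S, ⟨hsub, hdis, hinc⟩, rfl, fun i hcon => hbad ⟨i, hcon⟩⟩
  obtain ⟨i₀, hip1, hip2⟩ := hbad
  have hnp : p ∉ S i₀ := by
    intro hcon
    have h1 := inc_apply (hinc i₀) hcon hip1 (by omega) hlp0 hlp1
    rw [wp0, wp1] at h1
    exact absurd h1 (not_le.2 hxy)
  -- value facts
  have vF₁ : ∀ m, m ∈ S i₀ → m < p → ∀ (h : m < w.length), w[m] ≤ x := by
    intro m hm hlt hh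
    have h1 := inc_apply (hinc i₀) hm hip1 (by omega) hh hlp1
    rwa [wp1] at h1
  have vT₁ : ∀ m, m ∈ S i₀ → p + 2 < m → ∀ (h : m < w.length), z ≤ w[m] := by
    intro m hm hgt hh
    have h1 := inc_apply (hinc i₀) hip2 hm (by omega) hlp2 hh
    rwa [wp2] at h1
  by_cases hj : ∃ j, p ∈ S j
  · obtain ⟨j₀, hj0⟩ := hj
    have hne : j₀ ≠ i₀ := by rintro rfl; exact hnp hj0
    have hd := hdis i₀ j₀ (Ne.symm hne)
    have hdl : ∀ m, m ∈ S i₀ → m ∉ S j₀ := fun m hm => Finset.disjoint_left.1 hd hm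
    have hjp1 : p + 1 ∉ S j₀ := fun h => hdl _ hip1 h
    have hjp2 : p + 2 ∉ S j₀ := fun h => hdl _ hip2 h
    have vF₂ : ∀ m, m ∈ S j₀ → m < p → ∀ (h : m < w.length), w[m] ≤ y := by
      intro m hm hlt hh
      have h1 := inc_apply (hinc j₀) hm hj0 (by omega) hh hlp0
      rwa [wp0] at h1
    have vT₂ : ∀ m, m ∈ S j₀ → p + 2 < m → ∀ (h : m < w.length), y ≤ w[m] := by
      intro m hm hgt hh
      have h1 := inc_apply (hinc j₀) hj0 hm (by omega) hlp0 hh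
      rwa [wp0] at h1
    set F₁ := (S i₀).filter (fun m => m < p) with hF₁
    set T₁ := (S i₀).filter (fun m => p + 2 < m) with hT₁
    set F₂ := (S j₀).filter (fun m => m < p) with hF₂
    set T₂ := (S j₀).filter (fun m => p + 2 < m) with hT₂
    set A := F₁ ∪ {p+1} ∪ T₂ with hA
    set B := F₂ ∪ {p, p+2} ∪ T₁ with hB
    have hmA : ∀ m, m ∈ A ↔ (m ∈ S i₀ ∧ m < p) ∨ m = p + 1 ∨ (m ∈ S j₀ ∧ p + 2 < m) := by
      intro m
      simp only [hA, Finset.mem_union, Finset.mem_singleton, hF₁, hT₂, Finset.mem_filter,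
        or_assoc]
    have hmB : ∀ m, m ∈ B ↔ (m ∈ S j₀ ∧ m < p) ∨ (m = p ∨ m = p + 2) ∨
        (m ∈ S i₀ ∧ p + 2 < m) := by
      intro m
      simp only [hB, Finset.mem_union, Finset.mem_insert, Finset.mem_singleton, hF₂, hT₁,
        Finset.mem_filter, or_assoc]
    have eS1 : S i₀ = F₁ ∪ {p+1, p+2} ∪ T₁ := by
      ext m
      rw [Finset.mem_union, Finset.mem_union, Finset.mem_insert, Finset.mem_singleton, hF₁,
        hT₁, Finset.mem_filter, Finset.mem_filter]
      constructor
      · intro hm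
        by_cases h1 : m < p
        · exact Or.inl (Or.inl ⟨hm, h1⟩)
        by_cases h2 : m = p + 1
        · exact Or.inl (Or.inr (Or.inl h2))
        by_cases h3 : m = p + 2
        · exact Or.inl (Or.inr (Or.inr h3))
        · have hm2 : m ≠ p := fun h => hnp (h ▸ hm)
          exact Or.inr ⟨hm, by omega⟩
      · rintro ((⟨h, _⟩ | (h | h)) | ⟨h, _⟩)
        · exact h
        · rw [h]; exact hip1
        · rw [h]; exact hip2
        · exact h
    have eS2 : S j₀ = F₂ ∪ {p} ∪ T₂ := by
      ext m
      rw [Finset.mem_union, Finset.mem_union, Finset.mem_singleton, hF₂, hT₂,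
        Finset.mem_filter, Finset.mem_filter]
      constructor
      · intro hm
        by_cases h1 : m < p
        · exact Or.inl (Or.inl ⟨hm, h1⟩)
        by_cases h2 : m = p
        · exact Or.inl (Or.inr h2)
        · have hm2 : m ≠ p + 1 := fun h => hjp1 (h ▸ hm)
          have hm3 : m ≠ p + 2 := fun h => hjp2 (h ▸ hm)
          exact Or.inr ⟨hm, by omega⟩
      · rintro ((⟨h, _⟩ | h) | ⟨h, _⟩)
        · exact h
        · rw [h]; exact hj0
        · exact h
    have bF₁ : ∀ m ∈ F₁, m < p := fun m hm => (Finset.mem_filter.1 hm).2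
    have bT₁ : ∀ m ∈ T₁, p + 2 < m := fun m hm => (Finset.mem_filter.1 hm).2
    have bF₂ : ∀ m ∈ F₂, m < p := fun m hm => (Finset.mem_filter.1 hm).2
    have bT₂ : ∀ m ∈ T₂, p + 2 < m := fun m hm => (Finset.mem_filter.1 hm).2
    have bM : ∀ m ∈ ({p, p+2} : Finset ℕ), m = p ∨ m = p + 2 := by
      intro m hm
      rwa [Finset.mem_insert, Finset.mem_singleton] at hm
    have cM : ({p+1, p+2} : Finset ℕ).card = 2 := by
      rw [Finset.card_insert_of_notMem (by simp), Finset.card_singleton]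
    have cM2 : ({p, p+2} : Finset ℕ).card = 2 := by
      rw [Finset.card_insert_of_notMem (by simp), Finset.card_singleton]
    have cS1 : (S i₀).card = F₁.card + 2 + T₁.card := by
      rw [eS1, card_three
        (dis_of_ne fun m hm m' hm' => by
          have := bF₁ m hm
          have := (by rwa [Finset.mem_insert, Finset.mem_singleton] at hm' :
            m' = p + 1 ∨ m' = p + 2)
          omega)
        (dis_of_ne fun m hm m' hm' => by have := bF₁ m hm; have := bT₁ m' hm'; omega)
        (dis_of_ne fun m hm m' hm' => by
          have := (by rwa [Finset.mem_insert, Finset.mem_singleton] at hm :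
            m = p + 1 ∨ m = p + 2)
          have := bT₁ m' hm'; omega), cM]
    have cS2 : (S j₀).card = F₂.card + 1 + T₂.card := by
      rw [eS2, card_three
        (dis_of_ne fun m hm m' hm' => by have := bF₂ m hm; rw [Finset.mem_singleton] at hm'; omega)
        (dis_of_ne fun m hm m' hm' => by have := bF₂ m hm; have := bT₂ m' hm'; omega)
        (dis_of_ne fun m hm m' hm' => by rw [Finset.mem_singleton] at hm; have := bT₂ m' hm'; omega)]
      simp
    have cA : A.card = F₁.card + 1 + T₂.card := by
      rw [hA, card_three
        (dis_of_ne fun m hm m' hm' => by have := bF₁ m hm; rw [Finset.mem_singleton] at hm'; omega)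
        (dis_of_ne fun m hm m' hm' => by have := bF₁ m hm; have := bT₂ m' hm'; omega)
        (dis_of_ne fun m hm m' hm' => by rw [Finset.mem_singleton] at hm; have := bT₂ m' hm'; omega)]
      simp
    have cB : B.card = F₂.card + 2 + T₁.card := by
      rw [hB, card_three
        (dis_of_ne fun m hm m' hm' => by have := bF₂ m hm; have := bM m' hm'; omega)
        (dis_of_ne fun m hm m' hm' => by have := bF₂ m hm; have := bT₁ m' hm'; omega)
        (dis_of_ne fun m hm m' hm' => by have := bM m hm; have := bT₁ m' hm'; omega), cM2]
    refine ⟨fun i => if i = i₀ then A else if i = j₀ then B else S i, ⟨?_, ?_, ?_⟩, ?_, ?_⟩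
    · intro i m hm
      rw [Finset.mem_range]
      dsimp only at hm
      split_ifs at hm with h1 h2
      · rcases (hmA m).1 hm with ⟨h, hb⟩ | rfl | ⟨h, hb⟩
        · exact hmem i₀ m h
        · exact hlp1
        · exact hmem j₀ m h
      · rcases (hmB m).1 hm with ⟨h, hb⟩ | (rfl | rfl) | ⟨h, hb⟩
        · exact hmem j₀ m h
        · exact hlp0
        · exact hlp2
        · exact hmem i₀ m h
      · exact hmem i m hm
    · have dAB : Disjoint A B := by
        rw [Finset.disjoint_left]
        intro m hm hm'
        rcases (hmA m).1 hm with ⟨hA1, hA2⟩ | heqA | ⟨hA1, hA2⟩ <;>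
          rcases (hmB m).1 hm' with ⟨hB1, hB2⟩ | heqB | ⟨hB1, hB2⟩ <;>
          try omega
        · exact hdl m hA1 hB1
        · exact hdl m hB1 hA1
      have dAS : ∀ jj, jj ≠ i₀ → jj ≠ j₀ → Disjoint A (S jj) := by
        intro jj h1 h2
        rw [Finset.disjoint_left]
        intro m hm hm'
        have hd1 := Finset.disjoint_left.1 (hdis i₀ jj (Ne.symm h1))
        have hd2 := Finset.disjoint_left.1 (hdis j₀ jj (Ne.symm h2))
        rcases (hmA m).1 hm with ⟨h, _⟩ | rfl | ⟨h, _⟩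
        · exact hd1 h hm'
        · exact hd1 hip1 hm'
        · exact hd2 h hm'
      have dBS : ∀ jj, jj ≠ i₀ → jj ≠ j₀ → Disjoint B (S jj) := by
        intro jj h1 h2
        rw [Finset.disjoint_left]
        intro m hm hm'
        have hd1 := Finset.disjoint_left.1 (hdis i₀ jj (Ne.symm h1))
        have hd2 := Finset.disjoint_left.1 (hdis j₀ jj (Ne.symm h2))
        rcases (hmB m).1 hm with ⟨h, _⟩ | (rfl | rfl) | ⟨h, _⟩
        · exact hd2 h hm'
        · exact hd2 hj0 hm'
        · exact hd1 hip2 hm'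
        · exact hd1 h hm'
      intro i j hij
      dsimp only
      rcases eq_or_ne i i₀ with hi1 | hi1
      · rw [if_pos hi1]
        rcases eq_or_ne j i₀ with hj1 | hj1
        · exact absurd (hi1.trans hj1.symm) hij
        rcases eq_or_ne j j₀ with hjj | hjj
        · rw [if_neg hj1, if_pos hjj]
          exact dAB
        · rw [if_neg hj1, if_neg hjj]
          exact dAS j hj1 hjj
      rcases eq_or_ne i j₀ with hi2 | hi2
      · rw [if_neg hi1, if_pos hi2]
        rcases eq_or_ne j i₀ with hj1 | hj1
        · rw [if_pos hj1]
          exact dAB.symm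
        rcases eq_or_ne j j₀ with hjj | hjj
        · exact absurd (hi2.trans hjj.symm) hij
        · rw [if_neg hj1, if_neg hjj]
          exact dBS j hj1 hjj
      · rw [if_neg hi1, if_neg hi2]
        rcases eq_or_ne j i₀ with hj1 | hj1
        · rw [if_pos hj1]
          exact (dAS i hi1 hi2).symm
        rcases eq_or_ne j j₀ with hjj | hjj
        · rw [if_neg hj1, if_pos hjj]
          exact (dBS i hi1 hi2).symm
        · rw [if_neg hj1, if_neg hjj]
          exact hdis i j hij
    · intro i
      rw [incAlong_iff]
      intro m hm m' hm' hlt hb1 hb2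
      dsimp only at hm hm'
      split_ifs at hm hm' with h1
      · rcases (hmA m).1 hm with ⟨hA1, hA2⟩ | heq | ⟨hA1, hA2⟩ <;>
          rcases (hmA m').1 hm' with ⟨hB1, hB2⟩ | heq' | ⟨hB1, hB2⟩
        · exact inc_apply (hinc i₀) hA1 hB1 hlt hb1 hb2
        · subst heq'; rw [wp1]; exact vF₁ m hA1 hA2 hb1
        · exact le_trans (vF₁ m hA1 hA2 hb1) (le_trans (le_of_lt hxy) (vT₂ m' hB1 hB2 hb2))
        · omega
        · omega
        · subst heq; rw [wp1]; exact le_trans (le_of_lt hxy) (vT₂ m' hB1 hB2 hb2)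
        · omega
        · omega
        · exact inc_apply (hinc j₀) hA1 hB1 hlt hb1 hb2
      · rcases (hmB m).1 hm with ⟨hA1, hA2⟩ | heq | ⟨hA1, hA2⟩ <;>
          rcases (hmB m').1 hm' with ⟨hB1, hB2⟩ | heq' | ⟨hB1, hB2⟩
        · exact inc_apply (hinc j₀) hA1 hB1 hlt hb1 hb2
        · rcases heq' with rfl | rfl
          · rw [wp0]; exact vF₂ m hA1 hA2 hb1
          · rw [wp2]; exact le_trans (vF₂ m hA1 hA2 hb1) hyz
        · exact le_trans (vF₂ m hA1 hA2 hb1) (le_trans hyz (vT₁ m' hB1 hB2 hb2))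
        · rcases heq with rfl | rfl <;> omega
        · rcases heq with rfl | rfl <;> rcases heq' with rfl | rfl
          · omega
          · rw [wp0, wp2]; exact hyz
          · omega
          · omega
        · rcases heq with rfl | rfl
          · rw [wp0]; exact le_trans hyz (vT₁ m' hB1 hB2 hb2)
          · rw [wp2]; exact vT₁ m' hB1 hB2 hb2
        · omega
        · rcases heq' with rfl | rfl <;> omega
        · exact inc_apply (hinc i₀) hA1 hB1 hlt hb1 hb2
      · exact inc_apply (hinc i) hm hm' hlt hb1 hb2
    · simp only [apply_ite Finset.card]
      exact sum_card_two_swap _ i₀ j₀ (Ne.symm hne) _ _ (by omega)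
    · intro i
      dsimp only
      split_ifs with h1 h2
      · rintro ⟨-, hcon⟩
        rcases (hmA _).1 hcon with ⟨-, hb⟩ | he | ⟨-, hb⟩ <;> omega
      · rintro ⟨hcon, -⟩
        rcases (hmB _).1 hcon with ⟨-, hb⟩ | he | ⟨-, hb⟩ <;> omega
      · rintro ⟨hcon, -⟩
        exact Finset.disjoint_left.1 (hdis i i₀ h1) hcon hip1
  · push_neg at hj
    set A := ((S i₀).erase (p+1)) ∪ {p} with hA
    have hmA : ∀ m, m ∈ A ↔ (m ≠ p + 1 ∧ m ∈ S i₀) ∨ m = p := by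
      intro m
      simp only [hA, Finset.mem_union, Finset.mem_erase, Finset.mem_singleton]
    have cA : A.card = (S i₀).card := by
      rw [hA, Finset.card_union_of_disjoint (by
        rw [Finset.disjoint_left]
        intro m hm hm'
        rw [Finset.mem_singleton] at hm'
        exact hj i₀ (hm' ▸ (Finset.mem_erase.1 hm).2)),
        Finset.card_erase_of_mem hip1, Finset.card_singleton]
      have := Finset.card_ne_zero_of_mem hip1
      omega
    refine ⟨fun i => if i = i₀ then A else S i, ⟨?_, ?_, ?_⟩, ?_, ?_⟩
    · intro i m hm
      rw [Finset.mem_range]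
      dsimp only at hm
      split_ifs at hm with h1
      · rcases (hmA m).1 hm with ⟨-, h⟩ | rfl
        · exact hmem i₀ m h
        · exact hlp0
      · exact hmem i m hm
    · have dAS : ∀ jj, jj ≠ i₀ → Disjoint A (S jj) := by
        intro jj h1
        rw [Finset.disjoint_left]
        intro m hm hm'
        rcases (hmA m).1 hm with ⟨-, h⟩ | rfl
        · exact Finset.disjoint_left.1 (hdis i₀ jj (Ne.symm h1)) h hm'
        · exact hj jj hm'
      intro i j hij
      dsimp only
      split_ifs with h1 h2
      · exact absurd (h1.trans h2.symm) hij
      · exact dAS j h2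
      · exact (dAS i h1).symm
      · exact hdis i j hij
    · intro i
      rw [incAlong_iff]
      intro m hm m' hm' hlt hb1 hb2
      dsimp only at hm hm'
      split_ifs at hm hm' with h1
      · rcases (hmA m).1 hm with ⟨hA1, hA2⟩ | heq <;>
          rcases (hmA m').1 hm' with ⟨hB1, hB2⟩ | heq'
        · exact inc_apply (hinc i₀) hA2 hB2 hlt hb1 hb2
        · subst heq'
          rw [wp0]
          exact le_trans (vF₁ m hA2 hlt hb1) (le_of_lt hxy)
        · subst heq
          have hne2 : m' ≠ p := fun h => hj i₀ (h ▸ hB2)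
          rcases eq_or_ne m' (p+2) with rfl | hne3
          · rw [wp0, wp2]
            exact hyz
          · rw [wp0]
            exact le_trans hyz (vT₁ m' hB2 (by omega) hb2)
        · omega
      · exact inc_apply (hinc i) hm hm' hlt hb1 hb2
    · simp only [apply_ite Finset.card]
      exact sum_card_one _ i₀ _ cA
    · intro i
      dsimp only
      split_ifs with h1
      · rintro ⟨hcon, -⟩
        rcases (hmA _).1 hcon with ⟨hne', -⟩ | he
        · exact hne' rfl
        · omega
      · rintro ⟨hcon, -⟩
        exact Finset.disjoint_left.1 (hdis i i₀ h1) hcon hip1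

end Greene

namespace Greene
variable {α : Type*} [LinearOrder α]

lemma step_lval {w w' : List α} (h : KnuthStep w w') (k : ℕ) : Lval w k = Lval w' k := by
  cases h with
  | k1 u v x y z hxy hyz =>
    apply lval_eq_of_transfer
    · intro S hS
      refine fam_swap (u ++ z :: x :: y :: v) (u ++ x :: z :: y :: v) u.length
        (by rw [len_mid, len_mid]) (by rw [len_mid]; omega)
        (fun i h1 h2 => val_swap01 u v z x y i h1 h2) S hS ?_
      intro i hcon
      have hlp0 : u.length < (u ++ z :: x :: y :: v).length := by rw [len_mid]; omega
      have hlp1 : u.length + 1 < (u ++ z :: x :: y :: v).length := by rw [len_mid]; omega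
      have h1 := inc_apply (hS.2.2 i) hcon.1 hcon.2 (by omega) hlp0 hlp1
      rw [getElem_p0 u v z x y hlp0, getElem_p1 u v z x y hlp1] at h1
      exact absurd h1 (not_le.2 (lt_of_le_of_lt hxy hyz))
    · intro S hS
      obtain ⟨T, hT, hsum, hnobad⟩ := normalize_k1 u v x y z hxy hyz S hS
      obtain ⟨T', hT', hsum'⟩ := fam_swap (u ++ x :: z :: y :: v) (u ++ z :: x :: y :: v)
        u.length (by rw [len_mid, len_mid]) (by rw [len_mid]; omega)
        (fun i h1 h2 => val_swap01 u v x z y i h1 h2) T hT hnobad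
      exact ⟨T', hT', by rw [hsum', hsum]⟩
  | k2 u v x y z hxy hyz =>
    apply lval_eq_of_transfer
    · intro S hS
      obtain ⟨T, hT, hsum, hnobad⟩ := normalize_k2 u v x y z hxy hyz S hS
      obtain ⟨T', hT', hsum'⟩ := fam_swap (u ++ y :: x :: z :: v) (u ++ y :: z :: x :: v)
        (u.length + 1) (by rw [len_mid, len_mid]) (by rw [len_mid]; omega)
        (fun i h1 h2 => val_swap12 u v y x z i h1 h2) T hT hnobad
      exact ⟨T', hT', by rw [hsum', hsum]⟩
    · intro S hS
      refine fam_swap (u ++ y :: z :: x :: v) (u ++ y :: x :: z :: v) (u.length + 1)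
        (by rw [len_mid, len_mid]) (by rw [len_mid]; omega)
        (fun i h1 h2 => val_swap12 u v y z x i h1 h2) S hS ?_
      intro i hcon
      have hlp1 : u.length + 1 < (u ++ y :: z :: x :: v).length := by rw [len_mid]; omega
      have hlp2 : u.length + 1 + 1 < (u ++ y :: z :: x :: v).length := by rw [len_mid]; omega
      have h1 := inc_apply (hS.2.2 i) hcon.1 hcon.2 (by omega) hlp1 hlp2
      have e1 := getElem_p1 u v y z x hlp1
      have e2 : (u ++ y :: z :: x :: v)[u.length + 1 + 1]'hlp2 = x :=
        getElem_p2 u v y z x hlp2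
      rw [e1, e2] at h1
      exact absurd h1 (not_le.2 (lt_of_lt_of_le hxy hyz))

end Greene


/-- Knuth-equivalent words have the same Greene invariants: the maximal total length
of `k` disjoint increasing subsequences is the same for both words, for every `k`. -/
theorem greene_invariant_knuth {α : Type*} [LinearOrder α] (w w' : List α)
    (h : KnuthEquiv w w') (k : ℕ) : Lval w k = Lval w' k := by
  have h' : Relation.EqvGen KnuthStep w w' := h
  clear h
  induction h' with
  | rel a b hab => exact Greene.step_lval hab k
  | refl a => rfl
  | symm a b _ ih => exact ih.symm
  | trans a b c _ _ ih1 ih2 => exact ih1.trans ih2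
end

section
/- For any two rectangular partitions α and α' and any partition β, the Littlewood–Richardson coefficient c^β_{α,α'} is at most 1. -/
/-- The rectangular partition `(w^h)`: `h` rows of length `w` (rows indexed from 0,
French convention with row 0 at the bottom). -/
def rect (w h : ℕ) : ℕ → ℕ := fun r => if r < h then w else 0

/-- The content of the rectangular partition `(w^h)`, as a function on letters
`k ≥ 1`: letters `1,…,h` each occur `w` times. -/
def rectContent (w h : ℕ) : ℕ → ℕ := fun k => if 1 ≤ k ∧ k ≤ h then w else 0

/-- The cells of the skew shape `β/α`. -/
def SkewCell (α β : ℕ → ℕ) (r c : ℕ) : Prop := α r ≤ c ∧ c < β r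

/-- `T : ℕ → ℕ → ℕ` is a Littlewood–Richardson skew tableau of shape `β/α` and content
`γ`: it is supported on the cells of `β/α` with entries `≥ 1`, rows weakly increase,
columns strictly increase (bottom to top), the number of entries `k` is `γ k`, and the
lattice (Yamanouchi) condition holds: for every `i` and `k ≥ 1`, the number of entries
`k+1` in rows `≤ i` is at most the number of entries `k` in rows `≤ i-1`. -/
def IsLRTab (α β γ : ℕ → ℕ) (T : ℕ → ℕ → ℕ) : Prop :=
  (∀ r, α r ≤ β r) ∧
  (∀ r c, ¬ SkewCell α β r c → T r c = 0) ∧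
  (∀ r c, SkewCell α β r c → 1 ≤ T r c) ∧
  (∀ r c, SkewCell α β r c → SkewCell α β r (c + 1) → T r c ≤ T r (c + 1)) ∧
  (∀ r c, SkewCell α β r c → SkewCell α β (r + 1) c → T r c < T (r + 1) c) ∧
  (∀ k, 1 ≤ k →
    Set.ncard {p : ℕ × ℕ | SkewCell α β p.1 p.2 ∧ T p.1 p.2 = k} = γ k) ∧
  (∀ i k, 1 ≤ k →
    Set.ncard {p : ℕ × ℕ | p.1 ≤ i ∧ SkewCell α β p.1 p.2 ∧ T p.1 p.2 = k + 1} ≤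
      Set.ncard {p : ℕ × ℕ | p.1 + 1 ≤ i ∧ SkewCell α β p.1 p.2 ∧ T p.1 p.2 = k})

/-- The Littlewood–Richardson coefficient `c^β_{α,γ}`: the number of LR skew tableaux
of shape `β/α` and content `γ`. -/
noncomputable def lrCoeff (α γ β : ℕ → ℕ) : ℕ :=
  Set.ncard {T : ℕ → ℕ → ℕ | IsLRTab α β γ T}

set_option linter.unusedSectionVars false
namespace LRaux

lemma rect_le (w h r : ℕ) : rect w h r ≤ w := by
  unfold rect; split <;> simp

lemma rect_antitone (w h : ℕ) : Antitone (rect w h) := by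
  intro x y hxy
  unfold rect
  split
  · split
    · exact le_refl w
    · omega
  · exact Nat.zero_le _

lemma rect_of_ge (w h r : ℕ) (hr : h ≤ r) : rect w h r = 0 := by
  unfold rect; split <;> omega

lemma rect_of_lt (w h r : ℕ) (hr : r < h) : rect w h r = w := by
  unfold rect; split <;> omega

section Tab

variable {i a j b : ℕ} {β : ℕ → ℕ} {T : ℕ → ℕ → ℕ}

/-- number of right cells of letter v -/
def Rv (i : ℕ) (β : ℕ → ℕ) (v : ℕ) : ℕ := β (v - 1) - i
/-- number of left cells of letter v -/
def mv (i j : ℕ) (β : ℕ → ℕ) (v : ℕ) : ℕ := j - (β (v - 1) - i)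
/-- σ_c(k) = #{w ∈ [1,k] : m_w > c} -/
def sg (i j : ℕ) (β : ℕ → ℕ) (c k : ℕ) : ℕ :=
  ((Finset.Icc 1 k).filter (fun w => c < mv i j β w)).card

lemma mv_mono (hβ : Antitone β) {v w : ℕ} (hv : 1 ≤ v) (hvw : v ≤ w) :
    mv i j β v ≤ mv i j β w := by
  have : β (w - 1) ≤ β (v - 1) := hβ (by omega)
  unfold mv; omega

variable (hβ : Antitone β) (M : ℕ) (hM : ∀ r, M ≤ r → β r = 0)

lemma cells_finite (hβ : Antitone β) (M : ℕ) (hM : ∀ r, M ≤ r → β r = 0) :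
    {p : ℕ × ℕ | SkewCell (rect i a) β p.1 p.2}.Finite := by
  apply Set.Finite.subset ((Set.finite_Iio M).prod (Set.finite_Iio (β 0)))
  rintro ⟨r, c⟩ hp
  obtain ⟨h1, h2⟩ : rect i a r ≤ c ∧ c < β r := hp
  constructor
  · by_contra h
    simp only [Set.mem_Iio, not_lt] at h
    have := hM r h
    omega
  · have : β r ≤ β 0 := hβ (Nat.zero_le _)
    simp only [Set.mem_Iio]
    omega

variable (hT : IsLRTab (rect i a) β (rectContent j b) T)
include hβ hM hT


lemma T_row_mono {r c c' : ℕ} (h : SkewCell (rect i a) β r c)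
    (h' : SkewCell (rect i a) β r c') (hcc : c ≤ c') : T r c ≤ T r c' := by
  induction c', hcc using Nat.le_induction with
  | base => exact le_refl _
  | succ c'' hcc IH =>
    have hmid : SkewCell (rect i a) β r c'' := ⟨le_trans h.1 hcc, by have := h'.2; omega⟩
    exact le_trans (IH hmid) (hT.2.2.2.1 r c'' hmid h')

lemma T_col_strict {r r' c : ℕ} (h : SkewCell (rect i a) β r c)
    (h' : SkewCell (rect i a) β r' c) (hrr : r < r') : T r c < T r' c := by
  induction r', hrr using Nat.le_induction with
  | base => exact hT.2.2.2.2.1 r c h h'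
  | succ r'' hrr IH =>
    have hmid : SkewCell (rect i a) β r'' c :=
      ⟨le_trans (rect_antitone i a (by omega : r ≤ r'')) h.1,
       lt_of_lt_of_le h'.2 (hβ (Nat.le_succ r''))⟩
    exact lt_trans (IH hmid) (hT.2.2.2.2.1 r'' c hmid h')

lemma T_le_b {r c : ℕ} (h : SkewCell (rect i a) β r c) : T r c ≤ b := by
  by_contra hgt
  push_neg at hgt
  have h1 : 1 ≤ T r c := hT.2.2.1 r c h
  have hcnt := hT.2.2.2.2.2.1 (T r c) h1
  have hγ : rectContent j b (T r c) = 0 := by unfold rectContent; split <;> omega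
  rw [hγ] at hcnt
  have hfin2 : {p : ℕ × ℕ | SkewCell (rect i a) β p.1 p.2 ∧ T p.1 p.2 = T r c}.Finite :=
    (cells_finite hβ M hM).subset (fun p hp => hp.1)
  have : (r, c) ∈ {p : ℕ × ℕ | SkewCell (rect i a) β p.1 p.2 ∧ T p.1 p.2 = T r c} :=
    ⟨h, rfl⟩
  have hemp := (Set.ncard_eq_zero hfin2).1 hcnt
  rw [hemp] at this
  exact Set.notMem_empty _ this

lemma T_le_row : ∀ v r c, SkewCell (rect i a) β r c → T r c = v → v ≤ r + 1 := by
  intro v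
  induction v using Nat.strong_induction_on with
  | _ v IH =>
    intro r c h hv
    rcases Nat.eq_zero_or_pos v with h0 | hpos
    · omega
    rcases Nat.lt_or_ge v 2 with h1 | h2
    · omega
    -- v ≥ 2; use lattice at cutoff r with letter v-1
    have hlat := hT.2.2.2.2.2.2 r (v - 1) (by omega)
    have hv1 : v - 1 + 1 = v := by omega
    rw [hv1] at hlat
    have hmem : (r, c) ∈ {p : ℕ × ℕ | p.1 ≤ r ∧ SkewCell (rect i a) β p.1 p.2 ∧ T p.1 p.2 = v} :=
      ⟨le_refl r, h, hv⟩
    have hfinL : {p : ℕ × ℕ | p.1 ≤ r ∧ SkewCell (rect i a) β p.1 p.2 ∧ T p.1 p.2 = v}.Finite :=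
      (cells_finite hβ M hM).subset (fun p hp => hp.2.1)
    have hpos2 : 0 < Set.ncard {p : ℕ × ℕ | p.1 ≤ r ∧ SkewCell (rect i a) β p.1 p.2 ∧ T p.1 p.2 = v} :=
      (Set.ncard_pos hfinL).2 ⟨(r, c), hmem⟩
    have hpos3 : 0 < Set.ncard {p : ℕ × ℕ | p.1 + 1 ≤ r ∧ SkewCell (rect i a) β p.1 p.2 ∧ T p.1 p.2 = v - 1} :=
      lt_of_lt_of_le hpos2 hlat
    obtain ⟨⟨r', c'⟩, hr', hcell', hT'⟩ := Set.nonempty_of_ncard_ne_zero hpos3.ne'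
    have := IH (v - 1) (by omega) r' c' hcell' hT'
    omega

lemma T_ge_row : ∀ r c, SkewCell (rect i a) β r c → i ≤ c → r + 1 ≤ T r c := by
  intro r
  induction r with
  | zero => intro c h _; exact hT.2.2.1 0 c h
  | succ r IH =>
    intro c h hc
    have hmid : SkewCell (rect i a) β r c :=
      ⟨le_trans (rect_le i a r) hc, lt_of_lt_of_le h.2 (hβ (Nat.le_succ r))⟩
    have := IH c hmid hc
    have := hT.2.2.2.2.1 r c hmid h
    omega

lemma right_forced {r c : ℕ} (h : SkewCell (rect i a) β r c) (hc : i ≤ c) : T r c = r + 1 :=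
  le_antisymm (T_le_row hβ M hM hT (T r c) r c h rfl) (T_ge_row hβ M hM hT r c h hc)

lemma left_row_ge {r c : ℕ} (h : SkewCell (rect i a) β r c) (hc : c < i) : a ≤ r := by
  by_contra hlt
  push_neg at hlt
  have := h.1
  rw [rect_of_lt i a r hlt] at this
  omega

/-- right cells of letter `v` -/
def RightSet (i : ℕ) (β : ℕ → ℕ) (v : ℕ) : Set (ℕ × ℕ) :=
  (fun c => (v - 1, c)) '' Set.Ico i (β (v - 1))

/-- left cells of letter `v` -/
def LeftSet (i a : ℕ) (β : ℕ → ℕ) (T : ℕ → ℕ → ℕ) (v : ℕ) : Set (ℕ × ℕ) :=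
  {p | SkewCell (rect i a) β p.1 p.2 ∧ p.2 < i ∧ T p.1 p.2 = v}

omit hβ hM hT in
lemma rightSet_finite (v : ℕ) : (RightSet i β v).Finite :=
  (Set.finite_Ico _ _).image _

omit hβ hM hT in
lemma rightSet_ncard (v : ℕ) : (RightSet i β v).ncard = β (v - 1) - i := by
  unfold RightSet
  rw [Set.ncard_image_of_injective _ (fun x y h => congrArg Prod.snd h)]
  rw [← Finset.coe_Ico, Set.ncard_coe_finset, Nat.card_Ico]

lemma rightSet_spec {v r c : ℕ} (hv : 1 ≤ v) (hmem : (r, c) ∈ RightSet i β v) :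
    SkewCell (rect i a) β r c ∧ i ≤ c ∧ T r c = v := by
  obtain ⟨c', ⟨h1, h2⟩, heq⟩ := hmem
  obtain ⟨rfl, rfl⟩ := Prod.ext_iff.1 heq
  have hcell : SkewCell (rect i a) β (v - 1) c' := ⟨le_trans (rect_le i a _) h1, h2⟩
  have hf := right_forced hβ M hM hT hcell h1
  exact ⟨hcell, h1, by show T (v - 1) c' = v; omega⟩

lemma leftSet_finite (v : ℕ) : (LeftSet i a β T v).Finite :=
  (cells_finite hβ M hM).subset (fun _ hp => hp.1)

lemma entry_decomp {v : ℕ} (hv : 1 ≤ v) :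
    {p : ℕ × ℕ | SkewCell (rect i a) β p.1 p.2 ∧ T p.1 p.2 = v} =
      RightSet i β v ∪ LeftSet i a β T v := by
  ext ⟨r, c⟩
  simp only [Set.mem_setOf_eq, Set.mem_union]
  constructor
  · rintro ⟨hcell, hTv⟩
    by_cases hc : c < i
    · exact Or.inr ⟨hcell, hc, hTv⟩
    · push_neg at hc
      have hf := right_forced hβ M hM hT hcell hc
      have hr : r = v - 1 := by omega
      subst hr
      exact Or.inl ⟨c, ⟨hc, hcell.2⟩, rfl⟩
  · rintro (hmem | hmem)
    · obtain ⟨hcell, _, hTv⟩ := rightSet_spec hβ M hM hT hv hmem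
      exact ⟨hcell, hTv⟩
    · exact ⟨hmem.1, hmem.2.2⟩

omit hβ hM hT in
lemma disjoint_right_left (v : ℕ) : Disjoint (RightSet i β v) (LeftSet i a β T v) := by
  rw [Set.disjoint_left]
  rintro ⟨r, c⟩ hr hl
  obtain ⟨c', ⟨h1, _⟩, heq⟩ := hr
  obtain ⟨rfl, rfl⟩ := Prod.ext_iff.1 heq
  exact absurd hl.2.1 (not_lt.2 h1)

lemma leftSet_ncard {v : ℕ} (hv1 : 1 ≤ v) (hvb : v ≤ b) :
    (LeftSet i a β T v).ncard = mv i j β v ∧ β (v - 1) - i ≤ j := by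
  have hcnt := hT.2.2.2.2.2.1 v hv1
  have hγ : rectContent j b v = j := by unfold rectContent; rw [if_pos ⟨hv1, hvb⟩]
  rw [hγ, entry_decomp hβ M hM hT hv1,
    Set.ncard_union_eq (disjoint_right_left v) (rightSet_finite v) (leftSet_finite hβ M hM hT v),
    rightSet_ncard] at hcnt
  unfold mv
  omega

/-- the forced positions of letter `v` in the left region -/
def CharSet (i j a : ℕ) (β : ℕ → ℕ) (v : ℕ) : Set (ℕ × ℕ) :=
  (fun c => (a + sg i j β c (v - 1), c)) '' {c : ℕ | c < mv i j β v}

omit hβ hM hT in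
lemma charSet_spec {v : ℕ} {p : ℕ × ℕ} (h : p ∈ CharSet i j a β v) :
    p.2 < mv i j β v ∧ p.1 = a + sg i j β p.2 (v - 1) := by
  obtain ⟨c, hc, rfl⟩ := h
  exact ⟨hc, rfl⟩

omit hβ hM hT in
lemma mem_charSet {v c : ℕ} (hc : c < mv i j β v) :
    (a + sg i j β c (v - 1), c) ∈ CharSet i j a β v :=
  ⟨c, hc, rfl⟩

lemma row_eq_a {v r c : ℕ}
    (hIH : ∀ w, 1 ≤ w → w < v → LeftSet i a β T w = CharSet i j a β w)
    (hmem : (r, c) ∈ LeftSet i a β T v)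
    (hcols : ∀ w, 1 ≤ w → w < v → mv i j β w ≤ c) : r = a := by
  obtain ⟨hcell0, hci0, hTv0⟩ := hmem
  have hcell : SkewCell (rect i a) β r c := hcell0
  have hci : c < i := hci0
  have hTv : T r c = v := hTv0
  have har : a ≤ r := left_row_ge hβ M hM hT hcell hci
  rcases Nat.eq_or_lt_of_le har with heq | hlt
  · omega
  · exfalso
    have hcell' : SkewCell (rect i a) β (r - 1) c := by
      refine ⟨?_, lt_of_lt_of_le hcell.2 (hβ (by omega))⟩
      rw [rect_of_ge i a (r - 1) (by omega)]; exact Nat.zero_le _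
    have hlt2 : T (r - 1) c < T r c := by
      have := T_col_strict hβ M hM hT hcell' hcell (by omega)
      exact this
    have hw1 : 1 ≤ T (r - 1) c := hT.2.2.1 _ _ hcell'
    have hmem' : (r - 1, c) ∈ LeftSet i a β T (T (r - 1) c) := ⟨hcell', hci, rfl⟩
    rw [hIH (T (r - 1) c) hw1 (by omega)] at hmem'
    have hcv : c < mv i j β (T (r - 1) c) := (charSet_spec hmem').1
    have hcols' := hcols (T (r - 1) c) hw1 (by omega)
    omega

lemma row_formula {v r c : ℕ} (hv : 1 ≤ v)
    (hIH : ∀ w, 1 ≤ w → w < v → LeftSet i a β T w = CharSet i j a β w)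
    (hmem : (r, c) ∈ LeftSet i a β T v) : r = a + sg i j β c (v - 1) := by
  obtain ⟨hcell0, hci0, hTv0⟩ := hmem
  have hcell : SkewCell (rect i a) β r c := hcell0
  have hci : c < i := hci0
  have hTv : T r c = v := hTv0
  have har : a ≤ r := left_row_ge hβ M hM hT hcell hci
  set W : Finset ℕ := (Finset.Icc 1 (v - 1)).filter (fun w => c < mv i j β w) with hW
  -- cells strictly below r in column c
  have hcellbelow : ∀ r' ∈ Finset.Ico a r, SkewCell (rect i a) β r' c := by
    intro r' hr'
    simp only [Finset.mem_Ico] at hr'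
    refine ⟨?_, lt_of_lt_of_le hcell.2 (hβ (by omega))⟩
    rw [rect_of_ge i a r' hr'.1]; exact Nat.zero_le _
  have hcard1 : r - a ≤ W.card := by
    rw [show r - a = (Finset.Ico a r).card by rw [Nat.card_Ico]]
    apply Finset.card_le_card_of_injOn (fun r' => T r' c)
    · intro r' hr'
      have hcell' := hcellbelow r' hr'
      simp only [Finset.mem_coe, Finset.mem_Ico] at hr'
      have hlt2 : T r' c < T r c := T_col_strict hβ M hM hT hcell' hcell hr'.2
      have hw1 : 1 ≤ T r' c := hT.2.2.1 _ _ hcell'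
      have hmem' : (r', c) ∈ LeftSet i a β T (T r' c) := ⟨hcell', hci, rfl⟩
      rw [hIH (T r' c) hw1 (by omega)] at hmem'
      have hcw : c < mv i j β (T r' c) := (charSet_spec hmem').1
      simp only [hW, Finset.mem_coe, Finset.mem_filter, Finset.mem_Icc]
      omega
    · intro r1 h1 r2 h2 heq
      have heq' : T r1 c = T r2 c := heq
      simp only [Finset.mem_coe, Finset.mem_Ico] at h1 h2
      by_contra hne
      rcases Nat.lt_or_ge r1 r2 with hlt' | hge
      · have := T_col_strict hβ M hM hT (hcellbelow r1 (by simp [Finset.mem_Ico]; omega))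
          (hcellbelow r2 (by simp [Finset.mem_Ico]; omega)) hlt'
        omega
      · have hlt' : r2 < r1 := by omega
        have := T_col_strict hβ M hM hT (hcellbelow r2 (by simp [Finset.mem_Ico]; omega))
          (hcellbelow r1 (by simp [Finset.mem_Ico]; omega)) hlt'
        omega
  have hkey : ∀ w ∈ W, SkewCell (rect i a) β (a + sg i j β c (w - 1)) c ∧
      T (a + sg i j β c (w - 1)) c = w := by
    intro w hw
    simp only [hW, Finset.mem_filter, Finset.mem_Icc] at hw
    have hmemw : (a + sg i j β c (w - 1), c) ∈ CharSet i j a β w := mem_charSet hw.2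
    rw [← hIH w hw.1.1 (by omega)] at hmemw
    exact ⟨hmemw.1, hmemw.2.2⟩
  have hcard2 : W.card ≤ r - a := by
    rw [show r - a = (Finset.Ico a r).card by rw [Nat.card_Ico]]
    apply Finset.card_le_card_of_injOn (fun w => a + sg i j β c (w - 1))
    · intro w hw
      obtain ⟨hcellw, hTw⟩ := hkey w hw
      simp only [hW, Finset.mem_coe, Finset.mem_filter, Finset.mem_Icc] at hw
      simp only [Finset.mem_coe, Finset.mem_Ico]
      constructor
      · omega
      · rcases lt_trichotomy (a + sg i j β c (w - 1)) r with h | h | h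
        · exact h
        · exfalso; rw [h] at hTw; omega
        · exfalso
          have := T_col_strict hβ M hM hT hcell hcellw h
          omega
    · intro w1 h1 w2 h2 heq
      have k1 := (hkey w1 (by simpa using h1)).2
      have k2 := (hkey w2 (by simpa using h2)).2
      have heq' : a + sg i j β c (w1 - 1) = a + sg i j β c (w2 - 1) := heq
      rw [heq'] at k1
      omega
  have : sg i j β c (v - 1) = W.card := rfl
  omega

omit hβ hM hT in
lemma rightSet_fst {v : ℕ} {p : ℕ × ℕ} (h : p ∈ RightSet i β v) : p.1 = v - 1 := by
  obtain ⟨c', _, rfl⟩ := h; rfl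

omit hβ hM hT in
lemma rightSet_snd_ge {v : ℕ} {p : ℕ × ℕ} (h : p ∈ RightSet i β v) : i ≤ p.2 := by
  obtain ⟨c', hc', rfl⟩ := h; exact hc'.1

lemma left_char : ∀ v, 1 ≤ v → v ≤ b → LeftSet i a β T v = CharSet i j a β v := by
  intro v
  induction v using Nat.strong_induction_on with
  | _ v hIH0 =>
    intro hv1 hvb
    have hIH : ∀ w, 1 ≤ w → w < v → LeftSet i a β T w = CharSet i j a β w :=
      fun w hw1 hwv => hIH0 w hwv hw1 (by omega)
    have hRle : β (v - 1) - i ≤ j := (leftSet_ncard hβ M hM hT hv1 hvb).2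
    have hcard : (LeftSet i a β T v).ncard = mv i j β v := (leftSet_ncard hβ M hM hT hv1 hvb).1
    have hLfin := leftSet_finite hβ M hM hT v
    -- all columns of left v's are < mv v
    have hcolsmall : ∀ p ∈ LeftSet i a β T v, p.2 < mv i j β v := by
      rintro ⟨r0, c0⟩ hp
      by_contra hge
      push_neg at hge
      have hge' : mv i j β v ≤ c0 := hge
      have hcols : ∀ w, 1 ≤ w → w < v → mv i j β w ≤ c0 :=
        fun w hw1 hwv => le_trans (mv_mono hβ hw1 (by omega)) hge'
      have hr0 : r0 = a := row_eq_a hβ M hM hT hIH hp hcols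
      have hcell : SkewCell (rect i a) β a c0 := by
        have h := hp.1
        rw [hr0] at h
        exact h
      have hci : c0 < i := hp.2.1
      have hTv : T a c0 = v := by
        have h := hp.2.2
        rw [hr0] at h
        exact h
      have hva : v ≤ a + 1 := T_le_row hβ M hM hT v a c0 hcell hTv
      set c1 : ℕ := if v = 1 then 0 else mv i j β (v - 1) with hc1
      have hc1cols : ∀ w, 1 ≤ w → w < v → mv i j β w ≤ c1 := by
        intro w hw1 hwv
        rw [hc1]
        split
        · omega
        · exact mv_mono hβ hw1 (by omega)
      have hc1le : c1 ≤ mv i j β v := by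
        rw [hc1]; split
        · exact Nat.zero_le _
        · exact mv_mono hβ (by omega) (by omega)
      set D : Set (ℕ × ℕ) := {p | p ∈ LeftSet i a β T v ∧ c1 ≤ p.2} with hD
      have hDfin : D.Finite := hLfin.subset (fun p hp => hp.1)
      have hDrow : ∀ p ∈ D, p.1 = a := by
        rintro ⟨r2, c2⟩ ⟨hp2, hc2⟩
        have hc2' : c1 ≤ c2 := hc2
        exact row_eq_a hβ M hM hT hIH hp2 (fun w hw1 hwv => le_trans (hc1cols w hw1 hwv) hc2')
      -- contiguity at row a
      have hB : ∀ c2, c1 ≤ c2 → c2 ≤ c0 → (a, c2) ∈ D := by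
        intro c2 h1 h2
        have hcell2 : SkewCell (rect i a) β a c2 :=
          ⟨by rw [rect_of_ge i a a le_rfl]; exact Nat.zero_le _, by have := hcell.2; omega⟩
        have hle : T a c2 ≤ T a c0 := T_row_mono hβ M hM hT hcell2 hcell h2
        have hw1 : 1 ≤ T a c2 := hT.2.2.1 _ _ hcell2
        have hwv : T a c2 = v := by
          by_contra hne
          have hlt : T a c2 < v := by omega
          have hmem2 : (a, c2) ∈ LeftSet i a β T (T a c2) := ⟨hcell2, by omega, rfl⟩
          rw [hIH _ hw1 hlt] at hmem2
          have hcv : c2 < mv i j β (T a c2) := (charSet_spec hmem2).1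
          have := hc1cols (T a c2) hw1 hlt
          omega
        exact ⟨⟨hcell2, by omega, hwv⟩, h1⟩
      -- lower bound on D
      have hC : c0 + 1 - c1 ≤ D.ncard := by
        rw [Set.ncard_eq_toFinset_card _ hDfin]
        rw [show c0 + 1 - c1 = (Finset.Ico c1 (c0 + 1)).card by rw [Nat.card_Ico]]
        apply Finset.card_le_card_of_injOn (fun c2 => (a, c2))
        · intro c2 hc2
          simp only [Finset.mem_coe, Finset.mem_Ico] at hc2
          rw [Finset.mem_coe, Set.Finite.mem_toFinset]
          exact hB c2 hc2.1 (by omega)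
        · intro x _ y _ hxy; exact congrArg Prod.snd hxy
      -- upper bound on D
      have hA : D.ncard ≤ mv i j β v - c1 := by
        rcases Nat.lt_or_ge v 2 with hv2 | hv2
        · -- v = 1
          have hc10 : c1 = 0 := by rw [hc1, if_pos (by omega)]
          have : D.ncard ≤ (LeftSet i a β T v).ncard :=
            Set.ncard_le_ncard (fun p hp => hp.1) hLfin
          omega
        · -- v ≥ 2
          have hk1 : 1 ≤ v - 1 := by omega
          have hkb : v - 1 ≤ b := by omega
          have hlat := hT.2.2.2.2.2.2 a (v - 1) hk1
          rw [show v - 1 + 1 = v by omega] at hlat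
          have hLsub : RightSet i β v ∪ D ⊆
              {p : ℕ × ℕ | p.1 ≤ a ∧ SkewCell (rect i a) β p.1 p.2 ∧ T p.1 p.2 = v} := by
            rintro p (hmem | hmem)
            · obtain ⟨hcell2, hic2, hT2⟩ :=
                rightSet_spec hβ M hM hT hv1 (show (p.1, p.2) ∈ RightSet i β v by
                  rwa [Prod.mk.eta])
              have hrow := rightSet_fst hmem
              exact ⟨by omega, hcell2, hT2⟩
            · have hra := hDrow p hmem
              exact ⟨le_of_eq hra, hmem.1.1, hmem.1.2.2⟩
          have hdisj : Disjoint (RightSet i β v) D := by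
            rw [Set.disjoint_left]
            intro p hR hDm
            have h1 := rightSet_snd_ge hR
            have h2 : p.2 < i := hDm.1.2.1
            omega
          have hLfin2 : {p : ℕ × ℕ | p.1 ≤ a ∧ SkewCell (rect i a) β p.1 p.2 ∧
              T p.1 p.2 = v}.Finite := (cells_finite hβ M hM).subset (fun p hp => hp.2.1)
          have hge1 : (β (v - 1) - i) + D.ncard ≤
              Set.ncard {p : ℕ × ℕ | p.1 ≤ a ∧ SkewCell (rect i a) β p.1 p.2 ∧ T p.1 p.2 = v} := by
            rw [← rightSet_ncard (i := i) (β := β) v,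
              ← Set.ncard_union_eq hdisj (rightSet_finite v) hDfin]
            exact Set.ncard_le_ncard hLsub hLfin2
          have hRsub : {p : ℕ × ℕ | p.1 + 1 ≤ a ∧ SkewCell (rect i a) β p.1 p.2 ∧
              T p.1 p.2 = v - 1} ⊆ RightSet i β (v - 1) := by
            rintro ⟨r2, c2⟩ ⟨hra, hcell2, hT2⟩
            have hra' : r2 + 1 ≤ a := hra
            have hcell2' : SkewCell (rect i a) β r2 c2 := hcell2
            have hT2' : T r2 c2 = v - 1 := hT2
            have hic : i ≤ c2 := by
              have := hcell2'.1
              rwa [rect_of_lt i a r2 (by omega)] at this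
            have hforced := right_forced hβ M hM hT hcell2' hic
            have hr2 : r2 = v - 1 - 1 := by omega
            refine ⟨c2, ⟨hic, ?_⟩, ?_⟩
            · rw [← hr2]; exact hcell2'.2
            · rw [hr2]
          have hle2 : Set.ncard {p : ℕ × ℕ | p.1 + 1 ≤ a ∧ SkewCell (rect i a) β p.1 p.2 ∧
              T p.1 p.2 = v - 1} ≤ β (v - 1 - 1) - i := by
            rw [← rightSet_ncard (i := i) (β := β) (v - 1)]
            exact Set.ncard_le_ncard hRsub (rightSet_finite _)
          have hRk := (leftSet_ncard hβ M hM hT hk1 hkb).2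
          have hc1eq : c1 = j - (β (v - 1 - 1) - i) := by
            rw [hc1, if_neg (by omega)]; rfl
          have hmveq : mv i j β v = j - (β (v - 1) - i) := rfl
          omega
      omega
    -- column injectivity
    have hcolinj : ∀ p ∈ LeftSet i a β T v, ∀ q ∈ LeftSet i a β T v, p.2 = q.2 → p = q := by
      rintro ⟨r1, e1⟩ hp ⟨r2, e2⟩ hq heq
      have heq' : e1 = e2 := heq
      subst heq'
      have hp1 : SkewCell (rect i a) β r1 e1 := hp.1
      have hq1 : SkewCell (rect i a) β r2 e1 := hq.1
      have hpv : T r1 e1 = v := hp.2.2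
      have hqv : T r2 e1 = v := hq.2.2
      rcases lt_trichotomy r1 r2 with h | h | h
      · exfalso; have := T_col_strict hβ M hM hT hp1 hq1 h; omega
      · rw [h]
      · exfalso; have := T_col_strict hβ M hM hT hq1 hp1 h; omega
    -- columns form an initial segment
    have hFcard : hLfin.toFinset.card = mv i j β v := by
      rw [← Set.ncard_eq_toFinset_card _ hLfin, hcard]
    have hColscard : (hLfin.toFinset.image Prod.snd).card = mv i j β v := by
      rw [Finset.card_image_of_injOn, hFcard]
      intro p hp q hq heq
      exact hcolinj p (by simpa using hp) q (by simpa using hq) heq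
    have hColssub : hLfin.toFinset.image Prod.snd ⊆ Finset.range (mv i j β v) := by
      intro c2 hc2
      rw [Finset.mem_image] at hc2
      obtain ⟨p, hp, rfl⟩ := hc2
      rw [Finset.mem_range]
      exact hcolsmall p (by rwa [Set.Finite.mem_toFinset] at hp)
    have hColseq : hLfin.toFinset.image Prod.snd = Finset.range (mv i j β v) :=
      Finset.eq_of_subset_of_card_le hColssub (by rw [Finset.card_range, hColscard])
    -- conclude set equality
    ext ⟨r2, c2⟩
    constructor
    · intro hp
      have hc2 : c2 < mv i j β v := hcolsmall _ hp
      have hr2 : r2 = a + sg i j β c2 (v - 1) := row_formula hβ M hM hT hv1 hIH hp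
      exact ⟨c2, hc2, by rw [hr2]⟩
    · intro hp
      have hc2 : c2 < mv i j β v := (charSet_spec hp).1
      have hr2 : r2 = a + sg i j β c2 (v - 1) := (charSet_spec hp).2
      have hc2mem : c2 ∈ hLfin.toFinset.image Prod.snd := by
        rw [hColseq, Finset.mem_range]; exact hc2
      rw [Finset.mem_image] at hc2mem
      obtain ⟨⟨q1, q2⟩, hq, hq2⟩ := hc2mem
      have hq2' : q2 = c2 := hq2
      subst hq2'
      have hqL : (q1, q2) ∈ LeftSet i a β T v := by rwa [Set.Finite.mem_toFinset] at hq
      have hrow : q1 = a + sg i j β q2 (v - 1) := row_formula hβ M hM hT hv1 hIH hqL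
      have : (q1, q2) = (r2, q2) := by rw [hrow, ← hr2]
      rwa [this] at hqL

omit hT in
lemma tab_unique (T₁ T₂ : ℕ → ℕ → ℕ) (h1 : IsLRTab (rect i a) β (rectContent j b) T₁)
    (h2 : IsLRTab (rect i a) β (rectContent j b) T₂) : T₁ = T₂ := by
  funext r c
  by_cases hcell : SkewCell (rect i a) β r c
  · by_cases hc : c < i
    · have hv1 : 1 ≤ T₁ r c := h1.2.2.1 r c hcell
      have hvb : T₁ r c ≤ b := T_le_b hβ M hM h1 hcell
      have hmem : (r, c) ∈ LeftSet i a β T₁ (T₁ r c) := ⟨hcell, hc, rfl⟩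
      rw [left_char hβ M hM h1 _ hv1 hvb, ← left_char hβ M hM h2 _ hv1 hvb] at hmem
      have : T₂ r c = T₁ r c := hmem.2.2
      omega
    · push_neg at hc
      rw [right_forced hβ M hM h1 hcell hc, right_forced hβ M hM h2 hcell hc]
  · rw [h1.2.1 r c hcell, h2.2.1 r c hcell]

end Tab
end LRaux

/-- For rectangular partitions `α = (i^a)` and `α' = (j^b)` and any partition `β`,
the Littlewood–Richardson coefficient `c^β_{α,α'}` is at most 1. -/
theorem lr_rectangles_le_one (i a j b : ℕ) (β : ℕ → ℕ) (hβ : Antitone β)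
    (hfin : ∃ M, ∀ r, M ≤ r → β r = 0) :
    lrCoeff (rect i a) (rectContent j b) β ≤ 1 := by
  obtain ⟨M, hM⟩ := hfin
  unfold lrCoeff
  rcases Set.eq_empty_or_nonempty {T : ℕ → ℕ → ℕ | IsLRTab (rect i a) β (rectContent j b) T}
    with h | ⟨T₀, hT₀⟩
  · rw [h, Set.ncard_empty]; omega
  · have hsing : {T : ℕ → ℕ → ℕ | IsLRTab (rect i a) β (rectContent j b) T} = {T₀} :=
      Set.eq_singleton_iff_unique_mem.2
        ⟨hT₀, fun T hT => LRaux.tab_unique hβ M hM T T₀ hT hT₀⟩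
    rw [hsing, Set.ncard_singleton]
end
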